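/- arXiv:2304.05677 — 5 statements merged into one kernel-verified Lean document; each statement's English description precedes it below -/
import Mathlib

section
/- Let a < b be real numbers, λ > 0, r ∈ ℕ, and φ a smooth real-valued function on (a,b) with |φ'| ≥ λ on (a,b) and such that φ'' has at most r zeros on (a,b). Then there exists a constant c (depending only on r) such that for every t ≠ 0 and every smooth function f on [a,b], |∫_a^b e^{i t φ(x)} f(x) dx| ≤ (c/(λ|t|)) (r·‖f‖_∞ + |f(b)| + ∫_a^b |f'(x)| dx). -/
open MeasureTheory Set intervalIntegral Topology Filter

/-- constant sign of a continuous nonvanishing function on an ord-connected set -/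
lemma signConst {g : ℝ → ℝ} {s : Set ℝ} (hs : s.OrdConnected)
    (hc : ContinuousOn g s) (h0 : ∀ y ∈ s, g y ≠ 0) :
    (∀ y ∈ s, 0 < g y) ∨ (∀ y ∈ s, g y < 0) := by
  by_contra h
  push_neg at h
  obtain ⟨⟨y1, hy1, hy1'⟩, ⟨y2, hy2, hy2'⟩⟩ := h
  have hsub : uIcc y1 y2 ⊆ s := hs.uIcc_subset hy1 hy2
  have := intermediate_value_uIcc (hc.mono hsub)
  have h0' : (0:ℝ) ∈ uIcc (g y1) (g y2) := by
    rcases (h0 y1 hy1).lt_or_gt with h | h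
    · rcases (h0 y2 hy2).lt_or_gt with h' | h'
      · exact absurd h' (not_lt.2 hy2')
      · exact mem_uIcc.2 (Or.inl ⟨h.le, h'.le⟩)
    · exact absurd h (not_lt.2 hy1')
  obtain ⟨y, hy, hgy⟩ := this h0'
  exact h0 y (hsub hy) hgy

/-- van der Corput base estimate on an interval where `φ''` does not vanish. -/
lemma vdcBase {φ : ℝ → ℝ} {a b lam t : ℝ}
    (hlam : 0 < lam) (ht : t ≠ 0)
    (hφd : ∀ y ∈ Ioo a b, HasDerivAt φ (deriv φ y) y)
    (hφ'c : ContinuousOn (deriv φ) (Ioo a b))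
    (hφ'd : ∀ y ∈ Ioo a b, HasDerivAt (deriv φ) (deriv (deriv φ) y) y)
    (hφ''c : ContinuousOn (deriv (deriv φ)) (Ioo a b))
    (hl : ∀ y ∈ Ioo a b, lam ≤ |deriv φ y|)
    {u x : ℝ} (hau : a < u) (hux : u ≤ x) (hxb : x < b)
    (hz : ∀ y ∈ Ioo u x, deriv (deriv φ) y ≠ 0) :
    ‖∫ y in u..x, Complex.exp (Complex.I * ((t * φ y : ℝ) : ℂ))‖ ≤ 3 / (lam * |t|) := by
  rcases eq_or_lt_of_le hux with rfl | hux
  · simp; positivity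
  have hIccsub : Icc u x ⊆ Ioo a b := fun y hy => ⟨lt_of_lt_of_le hau hy.1, lt_of_le_of_lt hy.2 hxb⟩
  have hIoosub : Ioo u x ⊆ Ioo a b := Ioo_subset_Icc_self.trans hIccsub
  have ht' : (0:ℝ) < |t| := abs_pos.2 ht
  -- φ' is nonvanishing on Icc u x
  have hφ'ne : ∀ y ∈ Icc u x, deriv φ y ≠ 0 := by
    intro y hy h
    have := hl y (hIccsub hy); rw [h] at this; simp at this; linarith
  -- notation
  set g : ℝ → ℂ := fun y => Complex.exp (Complex.I * ((t * φ y : ℝ) : ℂ)) with hg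
  set D : ℝ → ℂ := fun y => Complex.I * ((t * deriv φ y : ℝ) : ℂ) with hD
  have hDne : ∀ y ∈ Icc u x, D y ≠ 0 := by
    intro y hy
    simp only [hD, mul_ne_zero_iff, Complex.I_ne_zero, Complex.ofReal_ne_zero, true_and]
    exact ⟨Complex.I_ne_zero, ht, hφ'ne y hy⟩
  have hgd : ∀ y ∈ Ioo a b, HasDerivAt g (D y * g y) y := by
    intro y hy
    have h1 : HasDerivAt (fun z => Complex.I * ((t * φ z : ℝ) : ℂ)) (D y) y := by
      have := (((hφd y hy).const_mul t).ofReal_comp).const_mul Complex.I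
      simpa [hD] using this
    simpa [hg, mul_comm] using h1.cexp
  have hDd : ∀ y ∈ Ioo a b, HasDerivAt D (Complex.I * ((t * deriv (deriv φ) y : ℝ) : ℂ)) y := by
    intro y hy
    have := (((hφ'd y hy).const_mul t).ofReal_comp).const_mul Complex.I
    simpa [hD] using this
  set ψ : ℝ → ℂ := fun y => 1 / D y with hψ
  have hψd : ∀ y ∈ Icc u x, HasDerivAt ψ
      (-(Complex.I * ((t * deriv (deriv φ) y : ℝ) : ℂ)) / (D y) ^ 2) y := by
    intro y hy
    have h := (hasDerivAt_const y (1:ℂ)).div (hDd y (hIccsub hy)) (hDne y hy)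
    have e : (0 * D y - 1 * (Complex.I * ((t * deriv (deriv φ) y : ℝ) : ℂ))) / D y ^ 2
        = -(Complex.I * ((t * deriv (deriv φ) y : ℝ) : ℂ)) / (D y) ^ 2 := by ring
    rw [e] at h
    exact h
  -- continuity facts on Icc u x
  have hφ'cI : ContinuousOn (deriv φ) (Icc u x) := hφ'c.mono hIccsub
  have hφ''cI : ContinuousOn (deriv (deriv φ)) (Icc u x) := hφ''c.mono hIccsub
  have hDc : ContinuousOn D (Icc u x) := by
    apply continuousOn_const.mul
    exact Complex.continuous_ofReal.comp_continuousOn (continuousOn_const.mul hφ'cI)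
  have hψc : ContinuousOn ψ (Icc u x) := continuousOn_const.div hDc hDne
  have hgc : ContinuousOn g (Icc u x) :=
    fun y hy => ((hgd y (hIccsub hy)).continuousAt).continuousWithinAt
  have hgderc : ContinuousOn (fun y => D y * g y) (Icc u x) := hDc.mul hgc
  have hψderc : ContinuousOn
      (fun y => -(Complex.I * ((t * deriv (deriv φ) y : ℝ) : ℂ)) / (D y) ^ 2) (Icc u x) := by
    apply ContinuousOn.div
    · exact (continuousOn_const.mul
        (Complex.continuous_ofReal.comp_continuousOn (continuousOn_const.mul hφ''cI))).neg
    · exact hDc.pow 2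
    · intro y hy; exact pow_ne_zero 2 (hDne y hy)
  have huIcc : uIcc u x = Icc u x := uIcc_of_le hux.le
  -- integration by parts
  have hibp := integral_mul_deriv_eq_deriv_mul_of_hasDerivAt
    (u := ψ) (v := g)
    (u' := fun y => -(Complex.I * ((t * deriv (deriv φ) y : ℝ) : ℂ)) / (D y) ^ 2)
    (v' := fun y => D y * g y)
    (a := u) (b := x)
    (by rw [huIcc]; exact hψc) (by rw [huIcc]; exact hgc)
    (fun y hy => hψd y (by rw [min_eq_left hux.le, max_eq_right hux.le] at hy; exact Ioo_subset_Icc_self hy))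
    (fun y hy => hgd y (by rw [min_eq_left hux.le, max_eq_right hux.le] at hy; exact hIoosub hy))
    ((hψderc.mono (by rw [huIcc])).intervalIntegrable)
    ((hgderc.mono (by rw [huIcc])).intervalIntegrable)
  have hptwise : ∀ y ∈ Icc u x, ψ y * (D y * g y) = g y := by
    intro y hy
    field_simp [hψ]
    have hψD : ψ y * D y = 1 := by simp only [hψ]; exact one_div_mul_cancel (hDne y hy)
    rw [hψD, one_mul]
  have hintg : (∫ y in u..x, g y) = ∫ y in u..x, ψ y * (D y * g y) := by
    apply intervalIntegral.integral_congr
    intro y hy; rw [huIcc] at hy; exact (hptwise y hy).symm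
  -- norms
  have hgnorm : ∀ y : ℝ, ‖g y‖ = 1 := by
    intro y
    rw [hg]
    simp only [mul_comm Complex.I]
    exact Complex.norm_exp_ofReal_mul_I _
  have hDnorm : ∀ y ∈ Icc u x, ‖D y‖ = |t| * |deriv φ y| := by
    intro y hy
    simp [hD, Complex.norm_real, Real.norm_eq_abs, abs_mul]
  have hψnorm : ∀ y ∈ Icc u x, ‖ψ y‖ ≤ 1 / (lam * |t|) := by
    intro y hy
    have h4 : (0:ℝ) < |deriv φ y| := lt_of_lt_of_le hlam (hl y (hIccsub hy))
    have h5 := hl y (hIccsub hy)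
    rw [hψ, norm_div, norm_one, hDnorm y hy]
    rw [div_le_div_iff₀ (mul_pos ht' h4) (mul_pos hlam ht')]
    nlinarith
  have h1 : ∀ y ∈ Icc u x,
      ‖(-(Complex.I * ((t * deriv (deriv φ) y : ℝ) : ℂ)) / (D y) ^ 2) * g y‖
        = (1/|t|) * (|deriv (deriv φ) y| / (deriv φ y) ^ 2) := by
    intro y hy
    rw [norm_mul, hgnorm, mul_one, norm_div, norm_neg, norm_pow, hDnorm y hy]
    rw [norm_mul, Complex.norm_I, one_mul, Complex.norm_real, Real.norm_eq_abs, abs_mul]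
    have h2 : deriv φ y ≠ 0 := hφ'ne y hy
    have h3 : |deriv φ y| ≠ 0 := abs_ne_zero.2 h2
    rw [mul_pow, sq_abs]
    field_simp
    rw [sq_abs, sq_abs]; ring
  -- the key integral bound
  have habsint : IntervalIntegrable
      (fun y => |deriv (deriv φ) y| / (deriv φ y) ^ 2) volume u x := by
    apply ContinuousOn.intervalIntegrable
    rw [huIcc]
    exact (hφ''cI.abs).div (hφ'cI.pow 2) (fun y hy => pow_ne_zero 2 (hφ'ne y hy))
  have hratint : IntervalIntegrable
      (fun y => deriv (deriv φ) y / (deriv φ y) ^ 2) volume u x := by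
    apply ContinuousOn.intervalIntegrable
    rw [huIcc]
    exact hφ''cI.div (hφ'cI.pow 2) (fun y hy => pow_ne_zero 2 (hφ'ne y hy))
  set ρ : ℝ → ℝ := fun y => -(deriv φ y)⁻¹ with hρ
  have hρd : ∀ y ∈ uIcc u x, HasDerivAt ρ (deriv (deriv φ) y / (deriv φ y) ^ 2) y := by
    intro y hy
    rw [huIcc] at hy
    have h := ((hasDerivAt_const y (1:ℝ)).div (hφ'd y (hIccsub hy)) (hφ'ne y hy)).neg
    have e : -((0 * deriv φ y - 1 * deriv (deriv φ) y) / deriv φ y ^ 2)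
        = deriv (deriv φ) y / (deriv φ y) ^ 2 := by ring
    rw [e] at h
    have e2 : (-((fun _ => (1:ℝ)) / deriv φ)) = ρ := by
      funext z; simp [hρ]
    rwa [e2] at h
  have hftc : (∫ y in u..x, deriv (deriv φ) y / (deriv φ y) ^ 2) = ρ x - ρ u :=
    intervalIntegral.integral_eq_sub_of_hasDerivAt hρd hratint
  -- bound |ρ x - ρ u| ≤ 1/lam using constant sign of φ'
  have hρbound : |ρ x - ρ u| ≤ 1 / lam := by
    have hux' : u ∈ Icc u x := ⟨le_refl u, hux.le⟩
    have hxx : x ∈ Icc u x := ⟨hux.le, le_refl x⟩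
    have hAu := hl u (hIccsub hux')
    have hAx := hl x (hIccsub hxx)
    rcases signConst ordConnected_Icc hφ'cI hφ'ne with hp | hn
    · have h1u : deriv φ u ≥ lam := by
        have := hp u hux'; rw [abs_of_pos this] at hAu; linarith
      have h1x : deriv φ x ≥ lam := by
        have := hp x hxx; rw [abs_of_pos this] at hAx; linarith
      have i1 : 0 < (deriv φ u)⁻¹ := inv_pos.2 (by linarith)
      have i2 : 0 < (deriv φ x)⁻¹ := inv_pos.2 (by linarith)
      have i3 : (deriv φ u)⁻¹ ≤ 1 / lam := by
        rw [div_eq_inv_mul, mul_one]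
        exact inv_anti₀ hlam h1u
      have i4 : (deriv φ x)⁻¹ ≤ 1 / lam := by
        rw [div_eq_inv_mul, mul_one]
        exact inv_anti₀ hlam h1x
      rw [hρ, abs_le]
      constructor <;> simp only [neg_sub, sub_neg_eq_add] <;> nlinarith
    · have h1u : deriv φ u ≤ -lam := by
        have := hn u hux'; rw [abs_of_neg this] at hAu; linarith
      have h1x : deriv φ x ≤ -lam := by
        have := hn x hxx; rw [abs_of_neg this] at hAx; linarith
      have i1 : (deriv φ u)⁻¹ < 0 := inv_lt_zero.2 (by linarith)
      have i2 : (deriv φ x)⁻¹ < 0 := inv_lt_zero.2 (by linarith)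
      have i3 : -(1/lam) ≤ (deriv φ u)⁻¹ := by
        rw [neg_le, ← inv_eq_one_div, ← inv_neg]
        exact inv_anti₀ hlam (by linarith)
      have i4 : -(1/lam) ≤ (deriv φ x)⁻¹ := by
        rw [neg_le, ← inv_eq_one_div, ← inv_neg]
        exact inv_anti₀ hlam (by linarith)
      rw [hρ, abs_le]
      constructor <;> simp only [neg_sub, sub_neg_eq_add] <;> nlinarith
  -- a.e. sign of φ''
  have haex : ∀ᵐ (y : ℝ), y ≠ x := by
    rw [MeasureTheory.ae_iff]
    have : {y : ℝ | ¬ y ≠ x} = {x} := by ext y; simp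
    rw [this]
    exact Real.volume_singleton
  have hkey : (∫ y in u..x, |deriv (deriv φ) y| / (deriv φ y) ^ 2) ≤ 1 / lam := by
    rcases signConst ordConnected_Ioo (hφ''c.mono hIoosub) hz with hp | hn
    · have : (∫ y in u..x, |deriv (deriv φ) y| / (deriv φ y) ^ 2)
          = ∫ y in u..x, deriv (deriv φ) y / (deriv φ y) ^ 2 := by
        apply intervalIntegral.integral_congr_ae
        filter_upwards [haex] with y hy hmem
        rw [Set.uIoc_of_le hux.le] at hmem
        have : y ∈ Ioo u x := ⟨hmem.1, lt_of_le_of_ne hmem.2 hy⟩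
        rw [abs_of_pos (hp y this)]
      rw [this, hftc]
      calc ρ x - ρ u ≤ |ρ x - ρ u| := le_abs_self _
        _ ≤ 1 / lam := hρbound
    · have : (∫ y in u..x, |deriv (deriv φ) y| / (deriv φ y) ^ 2)
          = ∫ y in u..x, -(deriv (deriv φ) y / (deriv φ y) ^ 2) := by
        apply intervalIntegral.integral_congr_ae
        filter_upwards [haex] with y hy hmem
        rw [Set.uIoc_of_le hux.le] at hmem
        have : y ∈ Ioo u x := ⟨hmem.1, lt_of_le_of_ne hmem.2 hy⟩
        rw [abs_of_neg (hn y this)]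
        ring
      rw [this, intervalIntegral.integral_neg, hftc]
      calc -(ρ x - ρ u) ≤ |ρ x - ρ u| := neg_le_abs _
        _ ≤ 1 / lam := hρbound
  -- put everything together
  have hfinal : ‖∫ y in u..x,
      (-(Complex.I * ((t * deriv (deriv φ) y : ℝ) : ℂ)) / (D y) ^ 2) * g y‖
        ≤ 1 / (lam * |t|) := by
    calc ‖∫ y in u..x, (-(Complex.I * ((t * deriv (deriv φ) y : ℝ) : ℂ)) / (D y) ^ 2) * g y‖
        ≤ ∫ y in u..x, ‖(-(Complex.I * ((t * deriv (deriv φ) y : ℝ) : ℂ)) / (D y) ^ 2) * g y‖ :=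
          intervalIntegral.norm_integral_le_integral_norm hux.le
      _ = ∫ y in u..x, (1/|t|) * (|deriv (deriv φ) y| / (deriv φ y) ^ 2) := by
          apply intervalIntegral.integral_congr
          intro y hy
          rw [huIcc] at hy
          exact h1 y hy
      _ = (1/|t|) * ∫ y in u..x, |deriv (deriv φ) y| / (deriv φ y) ^ 2 :=
          intervalIntegral.integral_const_mul _ _
      _ ≤ (1/|t|) * (1/lam) := by
          apply mul_le_mul_of_nonneg_left hkey (by positivity)
      _ = 1 / (lam * |t|) := by rw [one_div_mul_one_div]; ring_nf
  rw [hintg, hibp]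
  have hb1 : ‖ψ x * g x‖ ≤ 1 / (lam * |t|) := by
    rw [norm_mul, hgnorm, mul_one]
    exact hψnorm x ⟨hux.le, le_refl x⟩
  have hb2 : ‖ψ u * g u‖ ≤ 1 / (lam * |t|) := by
    rw [norm_mul, hgnorm, mul_one]
    exact hψnorm u ⟨le_refl u, hux.le⟩
  calc ‖ψ x * g x - ψ u * g u - ∫ y in u..x,
        (-(Complex.I * ((t * deriv (deriv φ) y : ℝ) : ℂ)) / (D y) ^ 2) * g y‖
      ≤ ‖ψ x * g x - ψ u * g u‖ + ‖∫ y in u..x,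
        (-(Complex.I * ((t * deriv (deriv φ) y : ℝ) : ℂ)) / (D y) ^ 2) * g y‖ := norm_sub_le _ _
    _ ≤ (‖ψ x * g x‖ + ‖ψ u * g u‖) + 1 / (lam * |t|) :=
        add_le_add (le_trans (norm_sub_le _ _) (le_refl _)) hfinal
    _ ≤ (1 / (lam * |t|) + 1 / (lam * |t|)) + 1 / (lam * |t|) := by
        exact add_le_add (add_le_add hb1 hb2) le_rfl
    _ = 3 / (lam * |t|) := by ring

/-- van der Corput estimate with at most `k` sign changes of `φ''`. -/
lemma vdcNoAmp {φ : ℝ → ℝ} {a b lam t : ℝ}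
    (hlam : 0 < lam) (ht : t ≠ 0)
    (hφd : ∀ y ∈ Ioo a b, HasDerivAt φ (deriv φ y) y)
    (hφ'c : ContinuousOn (deriv φ) (Ioo a b))
    (hφ'd : ∀ y ∈ Ioo a b, HasDerivAt (deriv φ) (deriv (deriv φ) y) y)
    (hφ''c : ContinuousOn (deriv (deriv φ)) (Ioo a b))
    (hl : ∀ y ∈ Ioo a b, lam ≤ |deriv φ y|)
    (Z : Finset ℝ) (hZ : ∀ y ∈ Ioo a b, deriv (deriv φ) y = 0 → y ∈ Z) :
    ∀ k : ℕ, ∀ u x : ℝ, a < u → u ≤ x → x < b →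
      (Z.filter (· ∈ Ioo u x)).card ≤ k →
      ‖∫ y in u..x, Complex.exp (Complex.I * ((t * φ y : ℝ) : ℂ))‖
        ≤ (3 * (k + 1 : ℝ)) / (lam * |t|) := by
  have ht' : (0:ℝ) < |t| := abs_pos.2 ht
  have hgc : ContinuousOn (fun y => Complex.exp (Complex.I * ((t * φ y : ℝ) : ℂ))) (Ioo a b) := by
    apply Complex.continuous_exp.comp_continuousOn
    apply continuousOn_const.mul
    apply Complex.continuous_ofReal.comp_continuousOn
    apply continuousOn_const.mul
    exact fun y hy => (hφd y hy).continuousAt.continuousWithinAt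
  intro k
  induction k with
  | zero =>
    intro u x hau hux hxb hcard
    have hz : ∀ y ∈ Ioo u x, deriv (deriv φ) y ≠ 0 := by
      intro y hy h
      have hy' : y ∈ Ioo a b := ⟨lt_trans hau hy.1, lt_trans hy.2 hxb⟩
      have : y ∈ Z.filter (· ∈ Ioo u x) := Finset.mem_filter.2 ⟨hZ y hy' h, by simpa using hy⟩
      have := Finset.card_pos.2 ⟨y, this⟩
      omega
    have := vdcBase hlam ht hφd hφ'c hφ'd hφ''c hl hau hux hxb hz
    calc _ ≤ 3 / (lam * |t|) := this
      _ = (3 * ((0:ℕ) + 1 : ℝ)) / (lam * |t|) := by norm_num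
  | succ k ih =>
    intro u x hau hux hxb hcard
    by_cases hemp : (Z.filter (· ∈ Ioo u x)) = ∅
    · have hz : ∀ y ∈ Ioo u x, deriv (deriv φ) y ≠ 0 := by
        intro y hy h
        have hy' : y ∈ Ioo a b := ⟨lt_trans hau hy.1, lt_trans hy.2 hxb⟩
        have : y ∈ Z.filter (· ∈ Ioo u x) := Finset.mem_filter.2 ⟨hZ y hy' h, by simpa using hy⟩
        rw [hemp] at this
        simp at this
      have := vdcBase hlam ht hφd hφ'c hφ'd hφ''c hl hau hux hxb hz
      refine le_trans this ?_
      rw [div_le_div_iff₀ (by positivity) (by positivity)]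
      nlinarith [Nat.cast_nonneg (α := ℝ) k, mul_pos hlam (abs_pos.2 ht)]
    · -- nonempty: split at the largest zero
      have hne : (Z.filter (· ∈ Ioo u x)).Nonempty := Finset.nonempty_of_ne_empty hemp
      set S := Z.filter (· ∈ Ioo u x) with hS
      set z := S.max' hne with hzdef
      have hzS : z ∈ S := S.max'_mem hne
      have hzIoo : z ∈ Ioo u x := by
        have := Finset.mem_filter.1 hzS
        simpa using this.2
      have hu_lt_x : u < x := lt_trans hzIoo.1 hzIoo.2
      -- integrability for splitting
      have hint1 : IntervalIntegrable
          (fun y => Complex.exp (Complex.I * ((t * φ y : ℝ) : ℂ))) volume u z := by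
        apply ContinuousOn.intervalIntegrable
        apply hgc.mono
        rw [uIcc_of_le hzIoo.1.le]
        exact fun y hy => ⟨lt_of_lt_of_le hau hy.1, lt_of_le_of_lt hy.2 (lt_trans hzIoo.2 hxb)⟩
      have hint2 : IntervalIntegrable
          (fun y => Complex.exp (Complex.I * ((t * φ y : ℝ) : ℂ))) volume z x := by
        apply ContinuousOn.intervalIntegrable
        apply hgc.mono
        rw [uIcc_of_le hzIoo.2.le]
        exact fun y hy => ⟨lt_of_lt_of_le (lt_trans hau hzIoo.1) hy.1, lt_of_le_of_lt hy.2 hxb⟩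
      have hsplit := intervalIntegral.integral_add_adjacent_intervals hint1 hint2
      -- estimate on the right piece: no zeros there
      have hzright : ∀ y ∈ Ioo z x, deriv (deriv φ) y ≠ 0 := by
        intro y hy h
        have hy' : y ∈ Ioo a b :=
          ⟨lt_trans (lt_trans hau hzIoo.1) hy.1, lt_trans hy.2 hxb⟩
        have hyS : y ∈ S := Finset.mem_filter.2
          ⟨hZ y hy' h, by simpa using (⟨lt_trans hzIoo.1 hy.1, hy.2⟩ : y ∈ Ioo u x)⟩
        have := S.le_max' y hyS
        rw [← hzdef] at this
        exact absurd hy.1 (not_lt.2 this)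
      have hright := vdcBase hlam ht hφd hφ'c hφ'd hφ''c hl
        (lt_trans hau hzIoo.1) hzIoo.2.le hxb hzright
      -- estimate on the left piece: induction hypothesis
      have hsub : Z.filter (· ∈ Ioo u z) ⊆ S.erase z := by
        intro w hw
        have hw' := Finset.mem_filter.1 hw
        have hwIoo : w ∈ Ioo u z := by simpa using hw'.2
        refine Finset.mem_erase.2 ⟨ne_of_lt hwIoo.2, Finset.mem_filter.2
          ⟨hw'.1, by simpa using (⟨hwIoo.1, lt_trans hwIoo.2 hzIoo.2⟩ : w ∈ Ioo u x)⟩⟩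
      have hcard' : (Z.filter (· ∈ Ioo u z)).card ≤ k := by
        have h1 := Finset.card_le_card hsub
        have h2 := Finset.card_erase_of_mem hzS
        omega
      have hleft := ih u z hau hzIoo.1.le (lt_trans hzIoo.2 hxb) hcard'
      calc ‖∫ y in u..x, Complex.exp (Complex.I * ((t * φ y : ℝ) : ℂ))‖
          = ‖(∫ y in u..z, Complex.exp (Complex.I * ((t * φ y : ℝ) : ℂ)))
            + ∫ y in z..x, Complex.exp (Complex.I * ((t * φ y : ℝ) : ℂ))‖ := by rw [hsplit]
        _ ≤ ‖∫ y in u..z, Complex.exp (Complex.I * ((t * φ y : ℝ) : ℂ))‖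
            + ‖∫ y in z..x, Complex.exp (Complex.I * ((t * φ y : ℝ) : ℂ))‖ := norm_add_le _ _
        _ ≤ (3 * ((k:ℝ) + 1)) / (lam * |t|) + 3 / (lam * |t|) := add_le_add hleft hright
        _ = (3 * (((k:ℕ):ℝ) + 1 + 1)) / (lam * |t|) := by rw [← add_div]; ring_nf
        _ = (3 * (((k+1:ℕ):ℝ) + 1)) / (lam * |t|) := by push_cast; ring_nf

set_option maxHeartbeats 2000000 in
/-- Corollary of van der Corput's lemma (case p = 1) with nonmonotonic derivative:
the constant `c` depends only on the number `r` of zeros of `φ''`. -/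
theorem stmt0 (r : ℕ) :
    ∃ c : ℝ, 0 < c ∧
      ∀ (a b lam : ℝ), a < b → 0 < lam →
      ∀ φ : ℝ → ℝ, ContDiffOn ℝ (⊤ : ℕ∞) φ (Ioo a b) →
        (∀ x ∈ Ioo a b, lam ≤ |deriv φ x|) →
        (∃ Z : Finset ℝ, Z.card ≤ r ∧
          ∀ x ∈ Ioo a b, deriv (deriv φ) x = 0 → x ∈ Z) →
      ∀ f : ℝ → ℂ, ContDiffOn ℝ (⊤ : ℕ∞) f (Icc a b) →
      ∀ t : ℝ, t ≠ 0 →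
        ‖∫ x in a..b, Complex.exp (Complex.I * ((t * φ x : ℝ) : ℂ)) * f x‖ ≤
          c / (lam * |t|) *
            ((r : ℝ) * (⨆ x : Icc a b, ‖f x‖) + ‖f b‖ + ∫ x in a..b, ‖deriv f x‖) := by
  refine ⟨3 * (r + 1 : ℝ), by positivity, ?_⟩
  intro a b lam hab hlam φ hφ hl hZex f hf t ht
  obtain ⟨Z, hZcard, hZ⟩ := hZex
  have ht' : (0:ℝ) < |t| := abs_pos.2 ht
  set g : ℝ → ℂ := fun y => Complex.exp (Complex.I * ((t * φ y : ℝ) : ℂ)) with hgdef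
  have hgnorm : ∀ y : ℝ, ‖g y‖ = 1 := by
    intro y
    rw [hgdef]
    simp only [mul_comm Complex.I]
    exact Complex.norm_exp_ofReal_mul_I _
  -- smoothness facts for φ on the open interval
  have hopen : IsOpen (Ioo a b) := isOpen_Ioo
  have hφ1 : ContDiffOn ℝ (⊤ : ℕ∞) (deriv φ) (Ioo a b) := hφ.deriv_of_isOpen hopen (by simp)
  have hφ2 : ContDiffOn ℝ (⊤ : ℕ∞) (deriv (deriv φ)) (Ioo a b) := hφ1.deriv_of_isOpen hopen (by simp)
  have hφd : ∀ y ∈ Ioo a b, HasDerivAt φ (deriv φ y) y := fun y hy =>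
    (((hφ.differentiableOn (by simp)) y hy).differentiableAt (hopen.mem_nhds hy)).hasDerivAt
  have hφ'd : ∀ y ∈ Ioo a b, HasDerivAt (deriv φ) (deriv (deriv φ) y) y := fun y hy =>
    (((hφ1.differentiableOn (by simp)) y hy).differentiableAt (hopen.mem_nhds hy)).hasDerivAt
  have hφ'c : ContinuousOn (deriv φ) (Ioo a b) := hφ1.continuousOn
  have hφ''c : ContinuousOn (deriv (deriv φ)) (Ioo a b) := hφ2.continuousOn
  -- the uniform bound for partial oscillatory integrals
  set M : ℝ := (3 * (r + 1 : ℝ)) / (lam * |t|) with hM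
  have hMpos : 0 < M := by rw [hM]; positivity
  have hG : ∀ u x : ℝ, a < u → u ≤ x → x < b → ‖∫ y in u..x, g y‖ ≤ M := by
    intro u x hau hux hxb
    have hcard : (Z.filter (· ∈ Ioo u x)).card ≤ r :=
      le_trans (Finset.card_filter_le _ _) hZcard
    exact vdcNoAmp hlam ht hφd hφ'c hφ'd hφ''c hl Z hZ r u x hau hux hxb hcard
  -- facts about f
  have hfc : ContinuousOn f (Icc a b) := hf.continuousOn
  have hderiv_eq : ∀ y ∈ Ioo a b, derivWithin f (Icc a b) y = deriv f y := fun y hy =>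
    derivWithin_of_mem_nhds (Icc_mem_nhds hy.1 hy.2)
  have hF'c : ContinuousOn (derivWithin f (Icc a b)) (Icc a b) :=
    hf.continuousOn_derivWithin (uniqueDiffOn_Icc hab) (by simp)
  have hfd : ∀ y ∈ Ioo a b, HasDerivAt f (deriv f y) y := by
    intro y hy
    have := ((hf.differentiableOn (by simp)) y (Ioo_subset_Icc_self hy)).differentiableAt
      (Icc_mem_nhds hy.1 hy.2)
    exact this.hasDerivAt
  have hf'c : ContinuousOn (deriv f) (Ioo a b) :=
    (hF'c.mono Ioo_subset_Icc_self).congr (fun y hy => (hderiv_eq y hy).symm)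
  -- a.e. avoidance of b
  have haeb : ∀ᵐ (y : ℝ), y ≠ b := by
    rw [MeasureTheory.ae_iff]
    have : {y : ℝ | ¬ y ≠ b} = {b} := by ext y; simp
    rw [this]
    exact Real.volume_singleton
  -- ∫ ‖deriv f‖ is a genuine (finite) integral
  have hIntF' : IntervalIntegrable (fun y => ‖derivWithin f (Icc a b) y‖) volume a b := by
    apply ContinuousOn.intervalIntegrable
    rw [uIcc_of_le hab.le]
    exact hF'c.norm
  have hInt' : IntervalIntegrable (fun y => ‖deriv f y‖) volume a b := by
    rw [intervalIntegrable_iff_integrableOn_Ioc_of_le hab.le] at hIntF' ⊢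
    apply hIntF'.congr_fun_ae
    have : ∀ᵐ y ∂(volume.restrict (Ioc a b)),
        ‖derivWithin f (Icc a b) y‖ = ‖deriv f y‖ := by
      rw [MeasureTheory.ae_restrict_iff' measurableSet_Ioc]
      filter_upwards [haeb] with y hy hymem
      rw [hderiv_eq y ⟨hymem.1, lt_of_le_of_ne hymem.2 hy⟩]
    exact this
  have hf'nonneg : 0 ≤ ∫ y in a..b, ‖deriv f y‖ :=
    intervalIntegral.integral_nonneg hab.le (fun y _ => norm_nonneg _)
  -- bound for f
  obtain ⟨C, hC⟩ := isCompact_Icc.exists_bound_of_continuousOn hfc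
  have hCnonneg : 0 ≤ C := le_trans (norm_nonneg _) (hC b ⟨hab.le, le_refl b⟩)
  -- integrability of the full integrand
  have hgc : ContinuousOn g (Ioo a b) := by
    apply Complex.continuous_exp.comp_continuousOn
    apply continuousOn_const.mul
    apply Complex.continuous_ofReal.comp_continuousOn
    exact continuousOn_const.mul hφ.continuousOn
  have hgfint : IntervalIntegrable (fun y => g y * f y) volume a b := by
    rw [intervalIntegrable_iff_integrableOn_Ioc_of_le hab.le]
    have h1 : IntegrableOn (fun y => g y * f y) (Ioo a b) volume := by
      refine ⟨(hgc.mul (hfc.mono Ioo_subset_Icc_self)).aestronglyMeasurable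
        hopen.measurableSet, ?_⟩
      apply MeasureTheory.HasFiniteIntegral.restrict_of_bounded (C := C) measure_Ioo_lt_top
      rw [MeasureTheory.ae_restrict_iff' hopen.measurableSet]
      filter_upwards with y hy
      rw [norm_mul, hgnorm, one_mul]
      exact hC y (Ioo_subset_Icc_self hy)
    exact h1.congr_set_ae (Ioo_ae_eq_Ioc).symm
  -- the target quantity
  set T : ℝ := M * (‖f b‖ + ∫ y in a..b, ‖deriv f y‖) with hT
  -- main step : ‖∫ a..b g f‖ ≤ T + ε for all ε > 0
  have hmain : ‖∫ y in a..b, g y * f y‖ ≤ T := by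
    apply le_of_forall_pos_le_add
    intro ε hε
    -- choose u close to a and v close to b
    set δ : ℝ := min (ε / (2 * (C + 1))) ((b - a) / 2) with hδ
    have hδpos : 0 < δ := lt_min (div_pos hε (by linarith)) (by linarith)
    have hδle1 : δ ≤ ε / (2 * (C + 1)) := min_le_left _ _
    have hδle2 : δ ≤ (b - a) / 2 := min_le_right _ _
    set u : ℝ := a + δ / 2 with hu
    have hau : a < u := by rw [hu]; linarith
    have hub : u < (a + b) / 2 := by rw [hu]; linarith
    have hub' : u < b := by rw [hu]; linarith
    set εv : ℝ := ε / (4 * (M + 1)) with hεv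
    have hεvpos : 0 < εv := by rw [hεv]; positivity
    have hvlb : b - δ / 2 < b := by linarith
    have hvlb2 : (a + b) / 2 ≤ b - δ / 2 := by linarith
    have hsubIcc : Ioo (b - δ/2) b ⊆ Icc a b := fun y hy =>
      ⟨le_trans (le_trans (by linarith) hvlb2) hy.1.le, hy.2.le⟩
    have hbmem : b ∈ Icc a b := ⟨hab.le, le_refl b⟩
    have hnb : (𝓝[Ioo (b - δ/2) b] b).NeBot := right_nhdsWithin_Ioo_neBot hvlb
    have htend : Filter.Tendsto (fun y => ‖f y‖) (𝓝[Ioo (b - δ/2) b] b) (𝓝 ‖f b‖) :=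
      ((hfc b hbmem).norm).mono_left (nhdsWithin_mono b hsubIcc)
    have hev := htend.eventually_lt_const (show ‖f b‖ < ‖f b‖ + εv by linarith)
    obtain ⟨v, hvf, hvmem⟩ := (hev.and (eventually_mem_nhdsWithin)).exists
    have hvb : v < b := hvmem.2
    have huv : u < v := lt_of_lt_of_le hub (le_trans hvlb2 hvmem.1.le)
    have hav : a < v := lt_trans hau huv
    have huIoo : u ∈ Ioo a b := ⟨hau, hub'⟩
    have hIccuv : Icc u v ⊆ Ioo a b := fun y hy =>
      ⟨lt_of_lt_of_le hau hy.1, lt_of_le_of_lt hy.2 hvb⟩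
    -- split the integral
    have hi1 : IntervalIntegrable (fun y => g y * f y) volume a u := by
      apply hgfint.mono_set
      rw [uIcc_of_le hab.le, uIcc_of_le hau.le]
      exact Icc_subset_Icc le_rfl hub'.le
    have hi2 : IntervalIntegrable (fun y => g y * f y) volume u v := by
      apply hgfint.mono_set
      rw [uIcc_of_le hab.le, uIcc_of_le huv.le]
      exact Icc_subset_Icc hau.le hvb.le
    have hi3 : IntervalIntegrable (fun y => g y * f y) volume v b := by
      apply hgfint.mono_set
      rw [uIcc_of_le hab.le, uIcc_of_le hvb.le]
      exact Icc_subset_Icc hav.le le_rfl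
    have h12 := intervalIntegral.integral_add_adjacent_intervals hi1 hi2
    have h3 := intervalIntegral.integral_add_adjacent_intervals (hi1.trans hi2) hi3
    -- edge bounds
    have hB1 : ‖∫ y in a..u, g y * f y‖ ≤ C * (δ / 2) := by
      have := intervalIntegral.norm_integral_le_of_norm_le_const (a := a) (b := u) (C := C)
        (f := fun y => g y * f y) ?_
      · calc ‖∫ y in a..u, g y * f y‖ ≤ C * |u - a| := this
          _ = C * (δ / 2) := by rw [hu]; rw [abs_of_nonneg (by linarith)]; ring_nf
      · intro y hy
        rw [Set.uIoc_of_le hau.le] at hy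
        rw [norm_mul, hgnorm, one_mul]
        exact hC y ⟨hy.1.le, le_trans hy.2 hub'.le⟩
    have hB3 : ‖∫ y in v..b, g y * f y‖ ≤ C * (δ / 2) := by
      have := intervalIntegral.norm_integral_le_of_norm_le_const (a := v) (b := b) (C := C)
        (f := fun y => g y * f y) ?_
      · calc ‖∫ y in v..b, g y * f y‖ ≤ C * |b - v| := this
          _ ≤ C * (δ / 2) := by
            apply mul_le_mul_of_nonneg_left ?_ hCnonneg
            rw [abs_of_nonneg (by linarith)]
            have := hvmem.1
            linarith
      · intro y hy
        rw [Set.uIoc_of_le hvb.le] at hy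
        rw [norm_mul, hgnorm, one_mul]
        exact hC y ⟨le_trans hav.le hy.1.le, hy.2⟩
    -- middle term via integration by parts
    set G : ℝ → ℂ := fun w => ∫ y in u..w, g y with hGdef
    have hGd : ∀ w ∈ Ioo a b, HasDerivAt G (g w) w := by
      intro w hw
      apply intervalIntegral.integral_hasDerivAt_right
      · apply ContinuousOn.intervalIntegrable
        exact hgc.mono (ordConnected_Ioo.uIcc_subset huIoo hw)
      · exact (hgc.stronglyMeasurableAtFilter hopen) w hw
      · exact hgc.continuousAt (hopen.mem_nhds hw)
    have hGc : ContinuousOn G (Ioo a b) := fun w hw =>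
      ((hGd w hw).continuousAt).continuousWithinAt
    have hibp := intervalIntegral.integral_mul_deriv_eq_deriv_mul_of_hasDerivAt
      (a := u) (b := v) (u := f) (v := G) (u' := deriv f) (v' := g)
      (hfc.mono ?_)
      (hGc.mono ?_)
      (fun w hw => hfd w (hIccuv (Ioo_subset_Icc_self
        (by rw [min_eq_left huv.le, max_eq_right huv.le] at hw; exact hw))))
      (fun w hw => hGd w (hIccuv (Ioo_subset_Icc_self
        (by rw [min_eq_left huv.le, max_eq_right huv.le] at hw; exact hw))))
      ((hf'c.mono ?_).intervalIntegrable)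
      ((hgc.mono ?_).intervalIntegrable)
    rotate_left
    · rw [uIcc_of_le huv.le]
      exact (hIccuv.trans Ioo_subset_Icc_self).trans (Icc_subset_Icc le_rfl le_rfl)
    · rw [uIcc_of_le huv.le]; exact hIccuv
    · rw [uIcc_of_le huv.le]; exact hIccuv
    · rw [uIcc_of_le huv.le]; exact hIccuv
    have hGu : G u = 0 := intervalIntegral.integral_same
    have hGv : ‖G v‖ ≤ M := hG u v hau huv.le hvb
    have hGw : ∀ w ∈ Icc u v, ‖G w‖ ≤ M := fun w hw =>
      hG u w hau hw.1 (lt_of_le_of_lt hw.2 hvb)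
    have hmono : (∫ y in u..v, ‖deriv f y‖) ≤ ∫ y in a..b, ‖deriv f y‖ := by
      apply intervalIntegral.integral_mono_interval hau.le huv.le hvb.le ?_ hInt'
      filter_upwards with y
      exact norm_nonneg _
    have int1 : IntervalIntegrable (fun y => ‖deriv f y * G y‖) volume u v := by
      apply ContinuousOn.intervalIntegrable
      rw [uIcc_of_le huv.le]
      exact ((hf'c.mono hIccuv).mul (hGc.mono hIccuv)).norm
    have int2 : IntervalIntegrable (fun y => ‖deriv f y‖ * M) volume u v := by
      apply ContinuousOn.intervalIntegrable
      rw [uIcc_of_le huv.le]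
      exact ((hf'c.mono hIccuv).norm).mul continuousOn_const
    have htail : ‖∫ y in u..v, deriv f y * G y‖ ≤ M * ∫ y in a..b, ‖deriv f y‖ := by
      calc ‖∫ y in u..v, deriv f y * G y‖ ≤ ∫ y in u..v, ‖deriv f y * G y‖ :=
            intervalIntegral.norm_integral_le_integral_norm huv.le
        _ ≤ ∫ y in u..v, ‖deriv f y‖ * M := by
            apply intervalIntegral.integral_mono_on huv.le int1 int2
            intro y hy
            rw [norm_mul]
            exact mul_le_mul_of_nonneg_left (hGw y hy) (norm_nonneg _)
        _ = (∫ y in u..v, ‖deriv f y‖) * M := intervalIntegral.integral_mul_const _ _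
        _ ≤ (∫ y in a..b, ‖deriv f y‖) * M := mul_le_mul_of_nonneg_right hmono hMpos.le
        _ = M * ∫ y in a..b, ‖deriv f y‖ := mul_comm _ _
    have hmid : ‖∫ y in u..v, g y * f y‖
        ≤ M * (‖f b‖ + εv) + M * ∫ y in a..b, ‖deriv f y‖ := by
      have hcomm : (∫ y in u..v, g y * f y) = ∫ y in u..v, f y * g y := by
        apply intervalIntegral.integral_congr
        intro y _
        exact mul_comm _ _
      rw [hcomm, hibp, hGu, mul_zero, sub_zero]
      calc ‖f v * G v - ∫ y in u..v, deriv f y * G y‖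
          ≤ ‖f v * G v‖ + ‖∫ y in u..v, deriv f y * G y‖ := norm_sub_le _ _
        _ ≤ (‖f b‖ + εv) * M + M * ∫ y in a..b, ‖deriv f y‖ := by
            apply add_le_add ?_ htail
            rw [norm_mul]
            exact mul_le_mul hvf.le hGv (norm_nonneg _) (by positivity)
        _ = M * (‖f b‖ + εv) + M * ∫ y in a..b, ‖deriv f y‖ := by ring
    -- put the three pieces together
    have heq : (∫ y in a..b, g y * f y)
        = ((∫ y in a..u, g y * f y) + ∫ y in u..v, g y * f y) + ∫ y in v..b, g y * f y := by
      rw [h12, h3]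
    rw [heq]
    have hCδ : C * (δ / 2) + C * (δ / 2) ≤ ε / 2 := by
      have : C * δ ≤ ε / 2 := by
        calc C * δ ≤ C * (ε / (2 * (C + 1))) := mul_le_mul_of_nonneg_left hδle1 hCnonneg
          _ ≤ ε / 2 := by
            rw [← mul_div_assoc]
            rw [div_le_div_iff₀ (by linarith) (by norm_num)]
            nlinarith
      linarith
    have hMεv : M * εv ≤ ε / 4 := by
      rw [hεv, ← mul_div_assoc]
      rw [div_le_div_iff₀ (by linarith) (by norm_num)]
      nlinarith
    have n1 := norm_add_le ((∫ y in a..u, g y * f y) + ∫ y in u..v, g y * f y)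
      (∫ y in v..b, g y * f y)
    have n2 := norm_add_le (∫ y in a..u, g y * f y) (∫ y in u..v, g y * f y)
    have hexp : M * (‖f b‖ + εv) = M * ‖f b‖ + M * εv := by ring
    have hexp2 : T = M * ‖f b‖ + M * ∫ y in a..b, ‖deriv f y‖ := by rw [hT]; ring
    linarith [n1, n2, hB1, hB3, hmid, hCδ, hMεv]
  -- conclude
  calc ‖∫ x in a..b, g x * f x‖ ≤ T := hmain
    _ ≤ (3 * (r + 1 : ℝ)) / (lam * |t|) *
        ((r : ℝ) * (⨆ x : Icc a b, ‖f x‖) + ‖f b‖ + ∫ x in a..b, ‖deriv f x‖) := by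
      rw [hT, hM]
      have hsup : 0 ≤ (⨆ x : Icc a b, ‖f x‖) := Real.iSup_nonneg (fun x => norm_nonneg _)
      have : (0:ℝ) ≤ (r : ℝ) * (⨆ x : Icc a b, ‖f x‖) := by positivity
      have hM' : (0:ℝ) ≤ (3 * (r + 1 : ℝ)) / (lam * |t|) := by positivity
      nlinarith
end

section
/- Let a, b, c, d be real numbers with b ≥ 0, d ≥ 0, a ≤ 0, c ≤ 0, and define the polynomial P(z) = 1 - 2(a+c)z + (3ac - bd - (a+c)(b+d))z² + 2ac(b+d)z³ + abcd z⁴. Then P, P', P'' have no common root in (0,∞). -/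
/-!
At a common root `z` of `P`, `P'`, `P''` the combination `P - z P' + (z²/2) P''` vanishes.
On a quartic `∑ cₖ zᵏ` this combination multiplies `cₖ zᵏ` by `1 - k + k(k-1)/2`, which is
`1, 0, 0, 1, 3` for `k = 0, …, 4`; so it equals `1 + 2ac(b+d) z³ + 3abcd z⁴`, which is at
least `1` for `z > 0` because `ac ≥ 0` and `b + d, bd ≥ 0`.
-/

def quartic (c₀ c₁ c₂ c₃ c₄ : ℝ) : ℝ → ℝ :=
  fun z => c₀ + c₁ * z + c₂ * z ^ 2 + c₃ * z ^ 3 + c₄ * z ^ 4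

section Quartic

variable (c₀ c₁ c₂ c₃ c₄ : ℝ)

theorem hasDerivAt_quartic (x : ℝ) :
    HasDerivAt (quartic c₀ c₁ c₂ c₃ c₄)
      (c₁ + 2 * c₂ * x + 3 * c₃ * x ^ 2 + 4 * c₄ * x ^ 3) x := by
  refine (((((hasDerivAt_id' x).const_mul c₁).const_add c₀).add
    ((hasDerivAt_pow 2 x).const_mul c₂)).add ((hasDerivAt_pow 3 x).const_mul c₃) |>.add
      ((hasDerivAt_pow 4 x).const_mul c₄)).congr_deriv ?_
  norm_num
  ring

theorem hasDerivAt_cubic (x : ℝ) :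
    HasDerivAt (fun z => c₀ + c₁ * z + c₂ * z ^ 2 + c₃ * z ^ 3)
      (c₁ + 2 * c₂ * x + 3 * c₃ * x ^ 2) x := by
  refine ((((hasDerivAt_id' x).const_mul c₁).const_add c₀).add
    ((hasDerivAt_pow 2 x).const_mul c₂)).add ((hasDerivAt_pow 3 x).const_mul c₃)
      |>.congr_deriv ?_
  norm_num
  ring

theorem deriv_quartic :
    deriv (quartic c₀ c₁ c₂ c₃ c₄) =
      fun z => c₁ + 2 * c₂ * z + 3 * c₃ * z ^ 2 + 4 * c₄ * z ^ 3 :=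
  funext fun x => (hasDerivAt_quartic c₀ c₁ c₂ c₃ c₄ x).deriv

theorem deriv_deriv_quartic :
    deriv (deriv (quartic c₀ c₁ c₂ c₃ c₄)) =
      fun z => 2 * c₂ + 2 * (3 * c₃) * z + 3 * (4 * c₄) * z ^ 2 := by
  rw [deriv_quartic]
  exact funext fun x => (hasDerivAt_cubic c₁ (2 * c₂) (3 * c₃) (4 * c₄) x).deriv

theorem quartic_triple_root_relation {x : ℝ} (h₀ : quartic c₀ c₁ c₂ c₃ c₄ x = 0)
    (h₁ : deriv (quartic c₀ c₁ c₂ c₃ c₄) x = 0)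
    (h₂ : deriv (deriv (quartic c₀ c₁ c₂ c₃ c₄)) x = 0) :
    c₀ + c₃ * x ^ 3 + 3 * c₄ * x ^ 4 = 0 := by
  rw [quartic] at h₀
  rw [deriv_quartic] at h₁
  rw [deriv_deriv_quartic] at h₂
  linear_combination h₀ - x * h₁ + x ^ 2 / 2 * h₂

end Quartic

/-- The polynomial `P` arising from the abcd-Boussinesq phase has no common root
of `P`, `P'`, `P''` in `(0,∞)` when `b,d ≥ 0` and `a,c ≤ 0`. -/
theorem stmt13 (a b c d : ℝ) (hb : 0 ≤ b) (hd : 0 ≤ d) (ha : a ≤ 0) (hc : c ≤ 0)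
    (P : ℝ → ℝ)
    (hP : ∀ z : ℝ, P z = 1 - 2 * (a + c) * z
        + (3 * a * c - b * d - (a + c) * (b + d)) * z ^ 2
        + 2 * a * c * (b + d) * z ^ 3 + a * b * c * d * z ^ 4) :
    ¬ ∃ z : ℝ, 0 < z ∧ P z = 0 ∧ deriv P z = 0 ∧ deriv (deriv P) z = 0 := by
  rintro ⟨z, hz, h₀, h₁, h₂⟩
  have hPq : P = quartic 1 (-2 * (a + c)) (3 * a * c - b * d - (a + c) * (b + d))
      (2 * a * c * (b + d)) (a * b * c * d) := by
    funext x
    rw [hP, quartic]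
    ring
  subst hPq
  have key := quartic_triple_root_relation _ _ _ _ _ h₀ h₁ h₂
  have hac : 0 ≤ a * c := mul_nonneg_of_nonpos_of_nonpos ha hc
  have hcube : 0 ≤ a * c * (b + d) * z ^ 3 :=
    mul_nonneg (mul_nonneg hac (add_nonneg hb hd)) (pow_nonneg hz.le 3)
  have hfourth : 0 ≤ a * c * (b * d) * z ^ 4 :=
    mul_nonneg (mul_nonneg hac (mul_nonneg hb hd)) (pow_nonneg hz.le 4)
  linarith
end

section
/- Let g(y) = √(y tanh(y)) for y > 0. Then g'(y) > 0 and g''(y) < 0 for all y > 0; moreover g'(y) - 1 ~ -y²/2 as y → 0⁺, g'(y) ~ (1/2)y^{-1/2} as y → +∞, g''(y) ~ -y as y → 0⁺, and g''(y) ~ -(1/4)y^{-3/2} as y → +∞. -/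
/-!
Write `t = tanh y`, `s = 1 - t² = tanh' y` and `f y = y t`, so that `g = √f`, `f' = t + y s`
and `f'' = 2 s (1 - y t)`. Then `g' = f' / (2 √f) > 0`, and `g'' = (2 f f'' - f'²) / (4 f √f)`
has numerator `-(4 y² t² s + (t - y s)²) < 0` because `(t + y s)² = (t - y s)² + 4 y t s`.
Both asymptotics are read off these closed forms: at `0⁺` from `tanh y = y + o(y²)`, which
follows from `y - y³/3 ≤ tanh y ≤ y`, and at `+∞` from `tanh y → 1` and `y² s → 0`
(since `s = cosh⁻² y ≤ 4 e^{-2y}`).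
-/

open Filter Set
open scoped Topology

namespace Real

theorem hasDerivAt_tanh (x : ℝ) : HasDerivAt tanh (1 - tanh x ^ 2) x := by
  have hc := (cosh_pos x).ne'
  rw [show tanh = fun x => sinh x / cosh x from funext fun _ => tanh_eq_sinh_div_cosh _]
  refine ((hasDerivAt_sinh x).div (hasDerivAt_cosh x) hc).congr_deriv ?_
  field_simp

theorem one_sub_tanh_sq (x : ℝ) : 1 - tanh x ^ 2 = (cosh x ^ 2)⁻¹ := by
  have hc := (cosh_pos x).ne'
  rw [tanh_eq_sinh_div_cosh]
  field_simp
  linear_combination cosh_sq_sub_sinh_sq x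

theorem tanh_pos {x : ℝ} (hx : 0 < x) : 0 < tanh x := by
  rw [tanh_eq_sinh_div_cosh]
  exact div_pos (sinh_pos_iff.mpr hx) (cosh_pos x)

theorem tanh_le_self {x : ℝ} (hx : 0 ≤ x) : tanh x ≤ x := by
  have hmono : Monotone fun z => z - tanh z :=
    monotone_of_hasDerivAt_nonneg (f' := fun z => tanh z ^ 2)
      (fun z => ((hasDerivAt_id' z).sub (hasDerivAt_tanh z)).congr_deriv (by ring))
      fun z => sq_nonneg _
  simpa [tanh_zero] using hmono hx

theorem self_sub_pow_three_div_three_le_tanh {x : ℝ} (hx : 0 ≤ x) :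
    x - x ^ 3 / 3 ≤ tanh x := by
  have hderiv (z : ℝ) : HasDerivAt (fun z => tanh z - z + z ^ 3 / 3) (z ^ 2 - tanh z ^ 2) z :=
    (((hasDerivAt_tanh z).sub (hasDerivAt_id' z)).add
      ((hasDerivAt_pow 3 z).div_const 3)).congr_deriv (by ring)
  have hmono : MonotoneOn (fun z => tanh z - z + z ^ 3 / 3) (Ici 0) := by
    refine monotoneOn_of_hasDerivWithinAt_nonneg (convex_Ici 0)
      (fun z _ => (hderiv z).continuousAt.continuousWithinAt)
      (fun z _ => (hderiv z).hasDerivWithinAt) fun z hz => ?_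
    rw [interior_Ici] at hz
    nlinarith [tanh_le_self (le_of_lt hz), tanh_pos hz]
  have := hmono self_mem_Ici (mem_Ici.mpr hx) hx
  simp only [tanh_zero] at this
  linarith

theorem tendsto_tanh_div_self_nhdsGT : Tendsto (fun x => tanh x / x) (𝓝[>] 0) (𝓝 1) := by
  have h := hasDerivAt_iff_tendsto_slope.mp (by simpa using hasDerivAt_tanh 0)
  exact (h.mono_left (nhdsWithin_mono 0 fun x hx => ne_of_gt hx)).congr fun x => by
    simp [slope_def_field]

theorem tendsto_tanh_sub_self_div_sq_nhdsGT :
    Tendsto (fun x => (tanh x - x) / x ^ 2) (𝓝[>] 0) (𝓝 0) := by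
  have hlow : Tendsto (fun x : ℝ => -(x / 3)) (𝓝[>] 0) (𝓝 0) := by
    have : Tendsto (fun x : ℝ => -(x / 3)) (𝓝 0) (𝓝 (-(0 / 3))) :=
      ((continuous_id.div_const 3).neg).tendsto 0
    simpa using this.mono_left nhdsWithin_le_nhds
  refine tendsto_of_tendsto_of_tendsto_of_le_of_le' hlow tendsto_const_nhds ?_ ?_
  all_goals filter_upwards [self_mem_nhdsWithin] with x (hx : 0 < x)
  · rw [le_div_iff₀ (by positivity)]
    nlinarith [self_sub_pow_three_div_three_le_tanh hx.le]
  · exact div_nonpos_of_nonpos_of_nonneg (by linarith [tanh_le_self hx.le]) (sq_nonneg x)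

theorem tendsto_tanh_atTop : Tendsto tanh atTop (𝓝 1) := by
  have he := tendsto_exp_neg_atTop_nhds_zero.pow 2
  have h := ((tendsto_const_nhds (x := (1 : ℝ))).sub he).div
    ((tendsto_const_nhds (x := (1 : ℝ))).add he) (by norm_num)
  rw [zero_pow two_ne_zero, sub_zero, add_zero, div_one] at h
  refine h.congr fun x => ?_
  simp only [Pi.div_apply]
  have hx : exp x * exp (-x) = 1 := by rw [← exp_add]; simp
  rw [tanh_eq]
  field_simp
  linear_combination (-2 * exp (-x)) * hx

theorem tendsto_sq_mul_one_sub_tanh_sq_atTop :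
    Tendsto (fun x => x ^ 2 * (1 - tanh x ^ 2)) atTop (𝓝 0) := by
  have hbound : Tendsto (fun x => 4 * (x * exp (-x)) ^ 2) atTop (𝓝 0) := by
    simpa using ((tendsto_pow_mul_exp_neg_atTop_nhds_zero 1).pow 2).const_mul 4
  refine squeeze_zero (fun x => ?_) (fun x => ?_) hbound
  · nlinarith [tanh_sq_lt_one x, sq_nonneg x]
  · have hcosh : 1 ≤ 2 * cosh x * exp (-x) := by
      have : exp x * exp (-x) = 1 := by rw [← exp_add]; simp
      rw [cosh_eq]
      nlinarith [exp_pos (-x)]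
    rw [one_sub_tanh_sq, ← div_eq_mul_inv, div_le_iff₀ (by positivity)]
    calc x ^ 2 = x ^ 2 * 1 ^ 2 := by ring
      _ ≤ x ^ 2 * (2 * cosh x * exp (-x)) ^ 2 := by gcongr
      _ = 4 * (x * exp (-x)) ^ 2 * cosh x ^ 2 := by ring

theorem tendsto_mul_one_sub_tanh_sq_atTop :
    Tendsto (fun x => x * (1 - tanh x ^ 2)) atTop (𝓝 0) := by
  have h := tendsto_sq_mul_one_sub_tanh_sq_atTop.mul tendsto_inv_atTop_zero
  rw [zero_mul] at h
  refine h.congr' ?_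
  filter_upwards [eventually_ne_atTop 0] with x hx
  field_simp

theorem sqrt_mul_eq_mul_sqrt_div {y : ℝ} (hy : 0 < y) (t : ℝ) :
    √(y * t) = y * √(t / y) := by
  rw [show y * t = y ^ 2 * (t / y) by field_simp, sqrt_mul (sq_nonneg y), sqrt_sq hy.le]

theorem eq_mul_sqrt_div_sq {y t : ℝ} (hy : 0 < y) (ht : 0 ≤ t) : t = y * √(t / y) ^ 2 := by
  rw [sq_sqrt (by positivity)]
  field_simp

end Real

open Real

theorem hasDerivAt_deriv_sqrt {f f' : ℝ → ℝ} {f'' y : ℝ}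
    (hf : ∀ᶠ x in 𝓝 y, HasDerivAt f (f' x) x) (hf' : HasDerivAt f' f'' y) (hy : 0 < f y) :
    HasDerivAt (deriv fun x => √(f x))
      ((2 * f y * f'' - f' y ^ 2) / (4 * f y * √(f y))) y := by
  have hpos : ∀ᶠ x in 𝓝 y, 0 < f x :=
    hf.self_of_nhds.continuousAt.eventually (lt_mem_nhds hy)
  have hderiv : deriv (fun x => √(f x)) =ᶠ[𝓝 y] fun x => f' x / (2 * √(f x)) := by
    filter_upwards [hf, hpos] with x hfx hx
    exact (hfx.sqrt hx.ne').deriv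
  refine HasDerivAt.congr_of_eventuallyEq ?_ hderiv
  refine (hf'.div ((hf.self_of_nhds.sqrt hy.ne').const_mul 2) (by positivity)).congr_deriv ?_
  have hsq : √(f y) ^ 2 = f y := sq_sqrt hy.le
  field_simp
  linear_combination (4 * f' y ^ 2) * hsq

theorem hasDerivAt_mul_tanh (x : ℝ) :
    HasDerivAt (fun x => x * tanh x) (tanh x + x * (1 - tanh x ^ 2)) x :=
  ((hasDerivAt_id' x).mul (hasDerivAt_tanh x)).congr_deriv (by ring)

theorem hasDerivAt_tanh_add_mul_one_sub_tanh_sq (x : ℝ) :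
    HasDerivAt (fun x => tanh x + x * (1 - tanh x ^ 2))
      (2 * (1 - tanh x ^ 2) * (1 - x * tanh x)) x :=
  ((hasDerivAt_tanh x).add ((hasDerivAt_id' x).mul
    (((hasDerivAt_tanh x).fun_pow 2).const_sub 1))).congr_deriv (by push_cast; ring)

theorem deriv_sqrt_mul_tanh {y : ℝ} (hy : 0 < y) :
    deriv (fun x => √(x * tanh x)) y =
      (tanh y + y * (1 - tanh y ^ 2)) / (2 * √(y * tanh y)) :=
  ((hasDerivAt_mul_tanh y).sqrt (mul_pos hy (tanh_pos hy)).ne').deriv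

theorem iteratedDeriv_two_sqrt_mul_tanh {y : ℝ} (hy : 0 < y) :
    iteratedDeriv 2 (fun x => √(x * tanh x)) y =
      -((4 * y ^ 2 * tanh y ^ 2 * (1 - tanh y ^ 2) + (tanh y - y * (1 - tanh y ^ 2)) ^ 2) /
        (4 * (y * tanh y) * √(y * tanh y))) := by
  rw [iteratedDeriv_succ, iteratedDeriv_one]
  have h := hasDerivAt_deriv_sqrt (Eventually.of_forall hasDerivAt_mul_tanh)
    (hasDerivAt_tanh_add_mul_one_sub_tanh_sq y) (mul_pos hy (tanh_pos hy))
  rw [h.deriv, ← neg_div]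
  congr 1
  ring

theorem deriv_sqrt_mul_tanh_pos {y : ℝ} (hy : 0 < y) :
    0 < deriv (fun x => √(x * tanh x)) y := by
  have ht := tanh_pos hy
  have hs : 0 < 1 - tanh y ^ 2 := sub_pos.mpr (tanh_sq_lt_one y)
  rw [deriv_sqrt_mul_tanh hy]
  positivity

theorem iteratedDeriv_two_sqrt_mul_tanh_neg {y : ℝ} (hy : 0 < y) :
    iteratedDeriv 2 (fun x => √(x * tanh x)) y < 0 := by
  have ht := tanh_pos hy
  have hs : 0 < 1 - tanh y ^ 2 := sub_pos.mpr (tanh_sq_lt_one y)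
  rw [iteratedDeriv_two_sqrt_mul_tanh hy, neg_lt_zero]
  positivity

theorem tendsto_deriv_sqrt_mul_tanh_sub_one_nhdsGT :
    Tendsto (fun y => (deriv (fun x => √(x * tanh x)) y - 1) / (-(y ^ 2) / 2))
      (𝓝[>] 0) (𝓝 1) := by
  have hr : Tendsto (fun y => √(tanh y / y)) (𝓝[>] 0) (𝓝 1) := by
    simpa using tendsto_tanh_div_self_nhdsGT.sqrt
  -- with `r = √(tanh y / y)`, the ratio is `r³ - ((tanh y - y) / y²)² / ((r + 1)² r)`
  have h := (hr.pow 3).sub ((tendsto_tanh_sub_self_div_sq_nhdsGT.pow 2).div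
    (((hr.add_const 1).pow 2).mul hr) (by norm_num))
  norm_num at h
  refine h.congr' ?_
  filter_upwards [self_mem_nhdsWithin] with y (hy : 0 < y)
  have ht := eq_mul_sqrt_div_sq hy (tanh_pos hy).le
  rw [deriv_sqrt_mul_tanh hy, sqrt_mul_eq_mul_sqrt_div hy]
  set r := √(tanh y / y)
  have hr₀ : 0 < r := sqrt_pos.mpr (div_pos (tanh_pos hy) hy)
  rw [ht]
  field_simp
  ring

theorem tendsto_iteratedDeriv_two_sqrt_mul_tanh_nhdsGT :
    Tendsto (fun y => iteratedDeriv 2 (fun x => √(x * tanh x)) y / (-y))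
      (𝓝[>] 0) (𝓝 1) := by
  have hr : Tendsto (fun y => √(tanh y / y)) (𝓝[>] 0) (𝓝 1) := by
    simpa using tendsto_tanh_div_self_nhdsGT.sqrt
  have hs : Tendsto (fun y => 1 - tanh y ^ 2) (𝓝[>] 0) (𝓝 1) := by
    simpa using (((hasDerivAt_tanh 0).continuousAt.tendsto.mono_left
      nhdsWithin_le_nhds).pow 2).const_sub 1
  have hid : Tendsto (fun y : ℝ => y) (𝓝[>] 0) (𝓝 0) := nhdsWithin_le_nhds
  -- with `r = √(tanh y / y)`, it is `(4 r⁴ s + ((tanh y - y) / y² + y r⁴)²) / (4 r³)`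
  have h := (((hr.pow 4).const_mul 4).mul hs).add
    ((tendsto_tanh_sub_self_div_sq_nhdsGT.add (hid.mul (hr.pow 4))).pow 2) |>.div
    ((hr.pow 3).const_mul 4) (by norm_num)
  norm_num [Pi.div_def] at h
  refine h.congr' ?_
  filter_upwards [self_mem_nhdsWithin] with y (hy : 0 < y)
  have ht := eq_mul_sqrt_div_sq hy (tanh_pos hy).le
  rw [iteratedDeriv_two_sqrt_mul_tanh hy, sqrt_mul_eq_mul_sqrt_div hy]
  set r := √(tanh y / y)
  have hr₀ : 0 < r := sqrt_pos.mpr (div_pos (tanh_pos hy) hy)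
  rw [ht]
  field_simp
  ring

theorem tendsto_deriv_sqrt_mul_tanh_atTop :
    Tendsto (fun y => deriv (fun x => √(x * tanh x)) y / ((1 / 2) * y ^ (-(1:ℝ) / 2)))
      atTop (𝓝 1) := by
  have h := (tendsto_tanh_atTop.add tendsto_mul_one_sub_tanh_sq_atTop).div
    tendsto_tanh_atTop.sqrt (by norm_num)
  norm_num [Pi.div_def] at h
  refine h.congr' ?_
  filter_upwards [eventually_gt_atTop 0] with y hy
  have ht := tanh_pos hy
  rw [deriv_sqrt_mul_tanh hy, sqrt_mul hy.le, neg_div, rpow_neg hy.le, ← sqrt_eq_rpow]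
  field_simp

theorem tendsto_iteratedDeriv_two_sqrt_mul_tanh_atTop :
    Tendsto (fun y => iteratedDeriv 2 (fun x => √(x * tanh x)) y /
      (-(1 / 4) * y ^ (-(3:ℝ) / 2))) atTop (𝓝 1) := by
  have h := (((tendsto_sq_mul_one_sub_tanh_sq_atTop.const_mul 4).mul
    (tendsto_tanh_atTop.pow 2)).add
    ((tendsto_tanh_atTop.sub tendsto_mul_one_sub_tanh_sq_atTop).pow 2)).div
    (tendsto_tanh_atTop.mul tendsto_tanh_atTop.sqrt) (by norm_num)
  norm_num [Pi.div_def] at h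
  refine h.congr' ?_
  filter_upwards [eventually_gt_atTop 0] with y hy
  have ht := tanh_pos hy
  have hy' : y ^ (-(3:ℝ) / 2) = (y * √y)⁻¹ := by
    rw [neg_div, rpow_neg hy.le, show (3:ℝ) / 2 = 1 + 1 / 2 by norm_num, rpow_add hy, rpow_one,
      ← sqrt_eq_rpow]
  rw [iteratedDeriv_two_sqrt_mul_tanh hy, sqrt_mul hy.le, hy']
  field_simp

/-- Properties of the water-wave phase `g(y) = √(y tanh y)`: monotonicity, concavity
and asymptotics of `g'` and `g''` at `0⁺` and `+∞`. -/
theorem stmt14 (g : ℝ → ℝ) (hg : ∀ y : ℝ, g y = Real.sqrt (y * Real.tanh y)) :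
    (∀ y : ℝ, 0 < y → 0 < deriv g y) ∧
    (∀ y : ℝ, 0 < y → iteratedDeriv 2 g y < 0) ∧
    Tendsto (fun y : ℝ => (deriv g y - 1) / (-(y ^ 2) / 2)) (𝓝[>] 0) (𝓝 1) ∧
    Tendsto (fun y : ℝ => deriv g y / ((1 / 2) * y ^ (-(1:ℝ) / 2))) atTop (𝓝 1) ∧
    Tendsto (fun y : ℝ => iteratedDeriv 2 g y / (-y)) (𝓝[>] 0) (𝓝 1) ∧
    Tendsto (fun y : ℝ => iteratedDeriv 2 g y / (-(1 / 4) * y ^ (-(3:ℝ) / 2))) atTop (𝓝 1) := by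
  obtain rfl : g = fun y => √(y * tanh y) := funext hg
  exact ⟨fun _ => deriv_sqrt_mul_tanh_pos, fun _ => iteratedDeriv_two_sqrt_mul_tanh_neg,
    tendsto_deriv_sqrt_mul_tanh_sub_one_nhdsGT, tendsto_deriv_sqrt_mul_tanh_atTop,
    tendsto_iteratedDeriv_two_sqrt_mul_tanh_nhdsGT,
    tendsto_iteratedDeriv_two_sqrt_mul_tanh_atTop⟩
end

section
/- Let φ(y) = y·coth(y) - 1 and g(y) = yφ(y) for y > 0. Then g''(y) > 0 for all y > 0, and g'(y) = y²(1 - coth²(y)) + 2y coth(y) - 1 satisfies g'(y) ~ y² as y → 0⁺ and g'(y) ~ 2y as y → +∞; also g''(y) ~ 2y as y → 0⁺ and g''(y) → 2 as y → +∞. -/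
open Filter
open scoped Topology

private lemma sinh_taylor {y : ℝ} (h0 : 0 < y) (h1 : y ≤ 1) :
    |Real.sinh y - y - y^3/6| ≤ y^4 := by
  have hb1 := Real.exp_bound (x := y) (by rw [abs_of_pos h0]; exact h1) (n := 5) (by norm_num)
  have hb2 := Real.exp_bound (x := -y) (by rw [abs_neg, abs_of_pos h0]; exact h1) (n := 5) (by norm_num)
  simp only [Finset.sum_range_succ, Finset.sum_range_zero] at hb1 hb2
  norm_num [Nat.factorial] at hb1 hb2
  rw [abs_of_pos h0] at hb1 hb2
  rw [Real.sinh_eq]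
  have h4 : y^5 ≤ y^4 := by rw [pow_succ y 4]; exact mul_le_of_le_one_right (pow_pos h0 4).le h1
  rw [abs_le] at hb1 hb2 ⊢
  constructor <;> nlinarith [hb1.1, hb1.2, hb2.1, hb2.2]

private lemma cosh_taylor {y : ℝ} (h0 : 0 < y) (h1 : y ≤ 1) :
    |Real.cosh y - 1 - y^2/2| ≤ y^3 := by
  have hb1 := Real.exp_bound (x := y) (by rw [abs_of_pos h0]; exact h1) (n := 4) (by norm_num)
  have hb2 := Real.exp_bound (x := -y) (by rw [abs_neg, abs_of_pos h0]; exact h1) (n := 4) (by norm_num)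
  simp only [Finset.sum_range_succ, Finset.sum_range_zero] at hb1 hb2
  norm_num [Nat.factorial] at hb1 hb2
  rw [abs_of_pos h0] at hb1 hb2
  rw [Real.cosh_eq]
  have h4 : y^4 ≤ y^3 := by rw [pow_succ y 3]; exact mul_le_of_le_one_right (pow_pos h0 3).le h1
  rw [abs_le] at hb1 hb2 ⊢
  constructor <;> nlinarith [hb1.1, hb1.2, hb2.1, hb2.2]

/-- `(sinh y - y)/y³ → 1/6` as `y → 0⁺`. -/
private lemma limB : Tendsto (fun y : ℝ => (Real.sinh y - y)/y^3) (𝓝[>] 0) (𝓝 (1/6)) := by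
  rw [← tendsto_sub_nhds_zero_iff]
  apply squeeze_zero_norm' (a := fun y : ℝ => y)
  · filter_upwards [Ioo_mem_nhdsGT_of_mem (by norm_num : (0:ℝ) ∈ Set.Ico (0:ℝ) 1)] with y hy
    obtain ⟨h0, h1⟩ := hy
    have hy3 : y^3 ≠ 0 := by positivity
    have heq : (Real.sinh y - y)/y^3 - 1/6 = (Real.sinh y - y - y^3/6)/y^3 := by
      rw [div_sub_div _ _ hy3 (by norm_num : (6:ℝ) ≠ 0),
        div_eq_div_iff (by positivity) hy3]
      ring
    rw [Real.norm_eq_abs, heq, abs_div, abs_of_pos (by positivity : (0:ℝ) < y^3)]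
    rw [div_le_iff₀ (by positivity)]
    calc |Real.sinh y - y - y^3/6| ≤ y^4 := sinh_taylor h0 h1.le
      _ = y * y^3 := by ring
  · exact tendsto_id.mono_left nhdsWithin_le_nhds

/-- `(cosh y - 1)/y² → 1/2` as `y → 0⁺`. -/
private lemma limA : Tendsto (fun y : ℝ => (Real.cosh y - 1)/y^2) (𝓝[>] 0) (𝓝 (1/2)) := by
  rw [← tendsto_sub_nhds_zero_iff]
  apply squeeze_zero_norm' (a := fun y : ℝ => y)
  · filter_upwards [Ioo_mem_nhdsGT_of_mem (by norm_num : (0:ℝ) ∈ Set.Ico (0:ℝ) 1)] with y hy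
    obtain ⟨h0, h1⟩ := hy
    have hy2 : y^2 ≠ 0 := by positivity
    have heq : (Real.cosh y - 1)/y^2 - 1/2 = (Real.cosh y - 1 - y^2/2)/y^2 := by
      rw [div_sub_div _ _ hy2 (by norm_num : (2:ℝ) ≠ 0),
        div_eq_div_iff (by positivity) hy2]
      ring
    rw [Real.norm_eq_abs, heq, abs_div, abs_of_pos (by positivity : (0:ℝ) < y^2)]
    rw [div_le_iff₀ (by positivity)]
    calc |Real.cosh y - 1 - y^2/2| ≤ y^3 := cosh_taylor h0 h1.le
      _ = y * y^2 := by ring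
  · exact tendsto_id.mono_left nhdsWithin_le_nhds

/-- `y / sinh y → 1` as `y → 0⁺`. -/
private lemma limC : Tendsto (fun y : ℝ => y / Real.sinh y) (𝓝[>] 0) (𝓝 1) := by
  have hy0 : Tendsto (fun y : ℝ => y) (𝓝[>] (0:ℝ)) (𝓝 0) :=
    tendsto_id.mono_left nhdsWithin_le_nhds
  have h1 : Tendsto (fun y : ℝ => 1 + (Real.sinh y - y)/y^3 * y^2) (𝓝[>] 0) (𝓝 1) := by
    have h := (tendsto_const_nhds (x := (1:ℝ))).add (limB.mul (hy0.pow 2))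
    convert h using 2
    norm_num
  have h2 := h1.inv₀ (by norm_num)
  rw [(by norm_num : ((1:ℝ))⁻¹ = 1)] at h2
  apply h2.congr'
  filter_upwards [self_mem_nhdsWithin] with y hy
  have h0 : 0 < y := hy
  have hs : Real.sinh y ≠ 0 := (Real.sinh_pos_iff.mpr h0).ne'
  have hiy : 1 + (Real.sinh y - y)/y^3 * y^2 = Real.sinh y / y := by
    have hy' : y ≠ 0 := h0.ne'
    field_simp
    ring
  rw [hiy, inv_div]

private noncomputable def Gf : ℝ → ℝ := fun y => y^2 * (Real.cosh y / Real.sinh y) - y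

private noncomputable def G1f : ℝ → ℝ := fun y =>
  y^2 * (1 - (Real.cosh y/Real.sinh y)^2) + 2*y*(Real.cosh y/Real.sinh y) - 1

private noncomputable def Df : ℝ → ℝ := fun y =>
  (2*Real.cosh y*(Real.sinh y^2 + y^2) - 4*y*Real.sinh y)/Real.sinh y^3

private lemma hasDeriv_Gf {y : ℝ} (hy : 0 < y) : HasDerivAt Gf (G1f y) y := by
  have hs : Real.sinh y ≠ 0 := (Real.sinh_pos_iff.mpr hy).ne'
  have hq : HasDerivAt (fun y => Real.cosh y / Real.sinh y)
      ((Real.sinh y * Real.sinh y - Real.cosh y * Real.cosh y)/ Real.sinh y ^ 2) y :=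
    (Real.hasDerivAt_cosh y).div (Real.hasDerivAt_sinh y) hs
  have h2 : HasDerivAt (fun y : ℝ => y^2) (2*y) y := by simpa using hasDerivAt_pow 2 y
  have h := (h2.mul hq).sub (hasDerivAt_id y)
  refine h.congr_deriv ?_
  symm
  simp only [G1f]
  field_simp
  ring

private lemma G1f_eq {y : ℝ} (hy : 0 < y) :
    G1f y = (2*y*Real.cosh y*Real.sinh y - y^2 - Real.sinh y^2)/Real.sinh y^2 := by
  have hs : Real.sinh y ≠ 0 := (Real.sinh_pos_iff.mpr hy).ne'
  have hc := Real.cosh_sq y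
  simp only [G1f]
  field_simp
  linear_combination (-y^2) * hc

private lemma hasDeriv_G1f {y : ℝ} (hy : 0 < y) : HasDerivAt G1f (Df y) y := by
  have hs : Real.sinh y ≠ 0 := (Real.sinh_pos_iff.mpr hy).ne'
  have hc := Real.cosh_sq y
  have hq : HasDerivAt (fun y => Real.cosh y / Real.sinh y)
      ((Real.sinh y * Real.sinh y - Real.cosh y * Real.cosh y)/ Real.sinh y ^ 2) y :=
    (Real.hasDerivAt_cosh y).div (Real.hasDerivAt_sinh y) hs
  have h2 : HasDerivAt (fun y : ℝ => y^2) (2*y) y := by simpa using hasDerivAt_pow 2 y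
  have hk2 := hq.pow 2
  have ht1 := (hasDerivAt_const y (1:ℝ)).sub hk2
  have hlin : HasDerivAt (fun y : ℝ => 2*y) 2 y := by
    simpa using (hasDerivAt_id y).const_mul (2:ℝ)
  have h := ((h2.mul ht1).add (hlin.mul hq)).sub_const 1
  refine h.congr_deriv ?_
  symm
  norm_num only [Pi.sub_apply, Pi.pow_apply, pow_one]
  simp only [Df]
  field_simp
  linear_combination (4*y*Real.sinh y - 2*Real.cosh y*y^2) * hc

/-- `y / sinh y → 0` as `y → +∞`. -/
private lemma limU : Tendsto (fun y : ℝ => y / Real.sinh y) atTop (𝓝 0) := by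
  have hinv : Tendsto (fun y : ℝ => y/Real.exp y) atTop (𝓝 0) := by
    have := (Real.tendsto_exp_div_pow_atTop 1).inv_tendsto_atTop
    refine this.congr fun x => ?_
    simp [inv_div]
  apply squeeze_zero'
  · filter_upwards [eventually_gt_atTop (0:ℝ)] with y hy
    exact div_nonneg hy.le (Real.sinh_pos_iff.mpr hy).le
  · filter_upwards [eventually_ge_atTop (1:ℝ)] with y hy
    have hy0 : (0:ℝ) < y := lt_of_lt_of_le one_pos hy
    have he : (2:ℝ) ≤ Real.exp y := by
      calc (2:ℝ) ≤ Real.exp 1 := by have := Real.add_one_le_exp (1:ℝ); linarith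
        _ ≤ Real.exp y := Real.exp_le_exp.mpr hy
    have hsinh : Real.exp y / 4 ≤ Real.sinh y := by
      rw [Real.sinh_eq]
      have h1 : Real.exp (-y) ≤ 1 := by rw [Real.exp_le_one_iff]; linarith
      linarith
    calc y / Real.sinh y ≤ y / (Real.exp y / 4) := by gcongr
      _ = 4 * (y / Real.exp y) := by field_simp
  · have : Tendsto (fun y : ℝ => 4 * (y/Real.exp y)) atTop (𝓝 (4 * 0)) := hinv.const_mul 4
    simpa using this

private lemma limS : Tendsto Real.sinh atTop atTop := by
  apply tendsto_atTop_mono' atTop (f₁ := fun y => (Real.exp y - 1)/2)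
  · filter_upwards [eventually_ge_atTop (0:ℝ)] with y hy
    rw [Real.sinh_eq]
    have : Real.exp (-y) ≤ 1 := by rw [Real.exp_le_one_iff]; linarith
    linarith
  · exact (tendsto_atTop_add_const_right _ (-1) Real.tendsto_exp_atTop).atTop_div_const
      (by norm_num)

/-- `cosh y / sinh y → 1` as `y → +∞`. -/
private lemma limK : Tendsto (fun y : ℝ => Real.cosh y / Real.sinh y) atTop (𝓝 1) := by
  have ht : Tendsto (fun y : ℝ => Real.exp (-(2*y))) atTop (𝓝 0) :=
    Real.tendsto_exp_neg_atTop_nhds_zero.comp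
      (tendsto_id.const_mul_atTop (by norm_num : (0:ℝ) < 2))
  have h := ((tendsto_const_nhds (x := (1:ℝ))).add ht).div
    ((tendsto_const_nhds (x := (1:ℝ))).sub ht) (by norm_num : (1:ℝ) - 0 ≠ 0)
  have h2 : Tendsto (fun y : ℝ => (1 + Real.exp (-(2*y)))/(1 - Real.exp (-(2*y))))
      atTop (𝓝 1) := by
    convert h using 2 <;> norm_num
  apply h2.congr'
  filter_upwards [eventually_gt_atTop (0:ℝ)] with y hy
  have hs : (0:ℝ) < Real.sinh y := Real.sinh_pos_iff.mpr hy
  rw [Real.sinh_eq] at hs ⊢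
  rw [Real.cosh_eq]
  have h2y : Real.exp (-(2*y)) = Real.exp (-y) * Real.exp (-y) := by
    rw [← Real.exp_add]; ring_nf
  have hxy : Real.exp (-y) * Real.exp y = 1 := by rw [← Real.exp_add]; simp
  have hne : Real.exp y - Real.exp (-y) ≠ 0 := by linarith
  have h1 : (1:ℝ) - Real.exp (-(2*y)) ≠ 0 := by
    rw [h2y]
    intro hcontra
    apply hne
    have hz : Real.exp (-y) * (Real.exp y - Real.exp (-y)) = 0 := by nlinarith
    rcases mul_eq_zero.mp hz with h | h
    · exact absurd h (Real.exp_ne_zero _)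
    · exact h
  rw [h2y] at h1 ⊢
  rw [div_eq_div_iff h1 (by positivity : (Real.exp y - Real.exp (-y))/2 ≠ 0)]
  linear_combination (Real.exp (-y)) * hxy

/-- Properties of the intermediate-long-wave phase `g(y) = y φ(y)`,
`φ(y) = y coth(y) - 1`: convexity, explicit first derivative, and asymptotics of
`g'` and `g''` at `0⁺` and `+∞`. -/
theorem stmt17 (φ g : ℝ → ℝ)
    (hφ : ∀ y : ℝ, φ y = y * (Real.cosh y / Real.sinh y) - 1)
    (hg : ∀ y : ℝ, g y = y * φ y) :
    (∀ y : ℝ, 0 < y → 0 < iteratedDeriv 2 g y) ∧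
    (∀ y : ℝ, 0 < y → deriv g y =
      y ^ 2 * (1 - (Real.cosh y / Real.sinh y) ^ 2)
        + 2 * y * (Real.cosh y / Real.sinh y) - 1) ∧
    Tendsto (fun y : ℝ => deriv g y / y ^ 2) (𝓝[>] 0) (𝓝 1) ∧
    Tendsto (fun y : ℝ => deriv g y / (2 * y)) atTop (𝓝 1) ∧
    Tendsto (fun y : ℝ => iteratedDeriv 2 g y / (2 * y)) (𝓝[>] 0) (𝓝 1) ∧
    Tendsto (fun y : ℝ => iteratedDeriv 2 g y) atTop (𝓝 2) := by
  have hgG : g = Gf := funext fun y => by rw [hg, hφ]; simp only [Gf]; ring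
  have hderiv : ∀ y : ℝ, 0 < y → deriv g y = G1f y := fun y hy => by
    rw [hgG]; exact (hasDeriv_Gf hy).deriv
  have hiter : ∀ y : ℝ, 0 < y → iteratedDeriv 2 g y = Df y := by
    intro y hy
    rw [iteratedDeriv_succ, iteratedDeriv_one]
    have hev : deriv g =ᶠ[𝓝 y] G1f := by
      filter_upwards [isOpen_Ioi.mem_nhds hy] with z hz using hderiv z hz
    rw [hev.deriv_eq]
    exact (hasDeriv_G1f hy).deriv
  have hy0 : Tendsto (fun y : ℝ => y) (𝓝[>] (0:ℝ)) (𝓝 0) :=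
    tendsto_id.mono_left nhdsWithin_le_nhds
  refine ⟨?_, ?_, ?_, ?_, ?_, ?_⟩
  · -- positivity of second derivative
    intro y hy
    rw [hiter y hy]
    have hs : 0 < Real.sinh y := Real.sinh_pos_iff.mpr hy
    have hc : 1 < Real.cosh y := Real.one_lt_cosh.mpr hy.ne'
    have hnum : 0 < 2*Real.cosh y*(Real.sinh y^2 + y^2) - 4*y*Real.sinh y := by
      nlinarith [sq_nonneg (Real.sinh y - y), mul_pos (sub_pos.mpr hc)
        (add_pos (pow_pos hs 2) (pow_pos hy 2))]
    exact div_pos hnum (by positivity)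
  · -- explicit first derivative
    intro y hy
    rw [hderiv y hy]
    rfl
  · -- deriv g / y² → 1 at 0⁺
    have key : Tendsto (fun y : ℝ =>
        (2*((Real.cosh y - 1)/y^2) + 2*(((Real.sinh y - y)/y^3)*((Real.cosh y - 1)/y^2))*y^2
          - ((Real.sinh y - y)/y^3)^2*y^2) * (y/Real.sinh y)^2) (𝓝[>] 0) (𝓝 1) := by
      have h := (((limA.const_mul 2).add
          (((limB.mul limA).const_mul 2).mul (hy0.pow 2))).sub
          ((limB.pow 2).mul (hy0.pow 2))).mul (limC.pow 2)
      convert h using 2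
      norm_num
    apply key.congr'
    filter_upwards [self_mem_nhdsWithin] with y hy
    have h0 : 0 < y := hy
    have hy' : y ≠ 0 := h0.ne'
    have hs : Real.sinh y ≠ 0 := (Real.sinh_pos_iff.mpr h0).ne'
    rw [hderiv y h0, G1f_eq h0]
    field_simp
    ring
  · -- deriv g / (2y) → 1 at +∞
    have hV : Tendsto (fun y : ℝ => (Real.sinh y)⁻¹) atTop (𝓝 0) := limS.inv_tendsto_atTop
    have hI : Tendsto (fun y : ℝ => (2*y)⁻¹) atTop (𝓝 0) :=
      (tendsto_id.const_mul_atTop (by norm_num : (0:ℝ) < 2)).inv_tendsto_atTop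
    have key : Tendsto (fun y : ℝ =>
        Real.cosh y/Real.sinh y - (y/Real.sinh y)*(Real.sinh y)⁻¹/2 - (2*y)⁻¹)
        atTop (𝓝 1) := by
      have h := (limK.sub ((limU.mul hV).div_const 2)).sub hI
      convert h using 2
      norm_num
    apply key.congr'
    filter_upwards [eventually_gt_atTop (0:ℝ)] with y hy
    have hy' : y ≠ 0 := hy.ne'
    have hs : Real.sinh y ≠ 0 := (Real.sinh_pos_iff.mpr hy).ne'
    rw [hderiv y hy, G1f_eq hy]
    field_simp
  · -- iteratedDeriv 2 g / (2y) → 1 at 0⁺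
    have key : Tendsto (fun y : ℝ =>
        (2*((Real.cosh y - 1)/y^2) + 2*(((Real.cosh y - 1)/y^2)*((Real.sinh y - y)/y^3))*y^2
          + ((Real.cosh y - 1)/y^2)*((Real.sinh y - y)/y^3)^2*y^4
          + ((Real.sinh y - y)/y^3)^2*y^2) * (y/Real.sinh y)^3) (𝓝[>] 0) (𝓝 1) := by
      have h := ((((limA.const_mul 2).add
          (((limA.mul limB).const_mul 2).mul (hy0.pow 2))).add
          ((limA.mul (limB.pow 2)).mul (hy0.pow 4))).add
          ((limB.pow 2).mul (hy0.pow 2))).mul (limC.pow 3)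
      convert h using 2
      norm_num
    apply key.congr'
    filter_upwards [self_mem_nhdsWithin] with y hy
    have h0 : 0 < y := hy
    have hy' : y ≠ 0 := h0.ne'
    have hs : Real.sinh y ≠ 0 := (Real.sinh_pos_iff.mpr h0).ne'
    rw [hiter y h0]
    simp only [Df]
    field_simp
    ring
  · -- iteratedDeriv 2 g → 2 at +∞
    have hV : Tendsto (fun y : ℝ => (Real.sinh y)⁻¹) atTop (𝓝 0) := limS.inv_tendsto_atTop
    have key : Tendsto (fun y : ℝ =>
        2*(Real.cosh y/Real.sinh y) - 4*((y/Real.sinh y)*(Real.sinh y)⁻¹)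
          + 2*((y/Real.sinh y)^2*(Real.cosh y/Real.sinh y))) atTop (𝓝 2) := by
      have h := ((limK.const_mul 2).sub ((limU.mul hV).const_mul 4)).add
        (((limU.pow 2).mul limK).const_mul 2)
      convert h using 2
      norm_num
    apply key.congr'
    filter_upwards [eventually_gt_atTop (0:ℝ)] with y hy
    have hy' : y ≠ 0 := hy.ne'
    have hs : Real.sinh y ≠ 0 := (Real.sinh_pos_iff.mpr hy).ne'
    rw [hiter y hy]
    simp only [Df]
    field_simp
    ring
end

section
/- Let g(y) = 1/y - b y³ with b < 0 for y > 0. Then g''(y) = 2/y³ - 6by > 0 for all y > 0, |g''(y)| ≥ 2 y^{-3} near 0 and |g''(y)| ≥ 6|b| y near ∞; as a consequence of the one-dimensional nonhomogeneous dispersive estimates, there exists C > 0 such that for every t ≠ 0 and u₀ ∈ L¹(ℝ), ‖e^{it g(D)} u₀‖_{L^∞} ≤ C |t|^{-1/2} ‖u₀‖_{L¹}. -/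
/-! For `b < 0` the second derivative `g''(ξ) = 2/ξ³ - 6bξ` of the symbol is bounded below by
`min 2 (-6b)` on the whole half-line `ξ > 0`, so the phase `zξ + t g(ξ)` has second derivative of
size at least `|t| min 2 (-6b)` there. Van der Corput's lemma then bounds the truncated kernel
`∫_{ε ≤ |ξ| ≤ R} exp (i (zξ + t g(|ξ|))) dξ` by `24 (|t| min 2 (-6b))^{-1/2}`, uniformly in `z`,
`ε` and `R`, while `|ξ| < ε` contributes at most `2ε`. By Fubini the truncated solution at `x` is
this kernel at `z = x - y` integrated against `u₀ y`, which gives the `L¹ → L^∞` bound; letting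
`R → ∞` concludes. -/

open MeasureTheory Complex Set

theorem norm_integral_exp_I_mul_neg (φ : ℝ → ℝ) (a b : ℝ) :
    ‖∫ ξ in a..b, exp (I * ↑(-φ ξ))‖ = ‖∫ ξ in a..b, exp (I * φ ξ)‖ := by
  rw [← RCLike.norm_conj, ← intervalIntegral.intervalIntegral_conj]
  congr 2 with ξ
  rw [← exp_conj]
  simp

theorem norm_integral_le_add_add_of_mem_Icc {E : Type*} [NormedAddCommGroup E] [NormedSpace ℝ E]
    {f : ℝ → E} {a b c d : ℝ} (hf : IntervalIntegrable f volume a b) (hc : c ∈ Icc a b)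
    (hd : d ∈ Icc a b) :
    ‖∫ x in a..b, f x‖ ≤ ‖∫ x in a..c, f x‖ + ‖∫ x in c..d, f x‖ + ‖∫ x in d..b, f x‖ := by
  have hab : a ≤ b := hc.1.trans hc.2
  have hint : ∀ x ∈ Icc a b, ∀ y ∈ Icc a b, IntervalIntegrable f volume x y := fun x hx y hy =>
    hf.mono_set (by rw [uIcc_of_le hab]; exact uIcc_subset_Icc hx hy)
  have ha : a ∈ Icc a b := left_mem_Icc.mpr hab
  have hb : b ∈ Icc a b := right_mem_Icc.mpr hab
  rw [← intervalIntegral.integral_add_adjacent_intervals (hint a ha d hd) (hint d hd b hb),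
    ← intervalIntegral.integral_add_adjacent_intervals (hint a ha c hc) (hint c hc d hd)]
  exact norm_add₃_le

theorem norm_integral_le_of_le_off_window {E : Type*} [NormedAddCommGroup E] [NormedSpace ℝ E]
    {f : ℝ → E} {a b m r B : ℝ} (hf : IntervalIntegrable f volume a b) (hf1 : ∀ x, ‖f x‖ ≤ 1)
    (hm : m ∈ Icc a b) (hr : 0 ≤ r) (hB : 0 ≤ B)
    (hpiece : ∀ c d, a ≤ c → c ≤ d → d ≤ b → (∀ x ∈ Icc c d, r ≤ |x - m|) →
      ‖∫ x in c..d, f x‖ ≤ B) :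
    ‖∫ x in a..b, f x‖ ≤ 2 * B + 2 * r := by
  set c := max a (m - r)
  set d := min b (m + r)
  have hleft : ‖∫ x in a..c, f x‖ ≤ B := by
    rcases le_or_gt (m - r) a with h | h
    · rwa [show c = a from max_eq_left h, intervalIntegral.integral_same, norm_zero]
    · rw [show c = m - r from max_eq_right h.le]
      refine hpiece a (m - r) le_rfl h.le (by linarith [hm.2]) fun x hx => ?_
      rw [abs_sub_comm, abs_of_nonneg] <;> linarith [hx.2]
  have hright : ‖∫ x in d..b, f x‖ ≤ B := by
    rcases le_or_gt b (m + r) with h | h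
    · rwa [show d = b from min_eq_left h, intervalIntegral.integral_same, norm_zero]
    · rw [show d = m + r from min_eq_right h.le]
      refine hpiece (m + r) b (by linarith [hm.1]) h.le le_rfl fun x hx => ?_
      rw [abs_of_nonneg] <;> linarith [hx.1]
  have hcm : c ≤ m := max_le hm.1 (by linarith)
  have hmd : m ≤ d := le_min hm.2 (by linarith)
  have hmiddle : ‖∫ x in c..d, f x‖ ≤ 2 * r := calc
    _ ≤ 1 * |d - c| := intervalIntegral.norm_integral_le_of_norm_le_const fun x _ => hf1 x
    _ ≤ 2 * r := by
      rw [one_mul, abs_of_nonneg (by linarith)]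
      linarith [le_max_right a (m - r), min_le_right b (m + r)]
  calc _ ≤ ‖∫ x in a..c, f x‖ + ‖∫ x in c..d, f x‖ + ‖∫ x in d..b, f x‖ :=
        norm_integral_le_add_add_of_mem_Icc hf ⟨le_max_left _ _, hcm.trans hm.2⟩
          ⟨hm.1.trans hmd, min_le_left _ _⟩
    _ ≤ B + 2 * r + B := add_le_add (add_le_add hleft hmiddle) hright
    _ = 2 * B + 2 * r := by ring

theorem norm_integral_integral_mul_le {α β : Type*} [MeasurableSpace α] [MeasurableSpace β]
    {μ : Measure α} {ν : Measure β} [IsFiniteMeasure μ] [SFinite ν] {k : α → β → ℂ}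
    {u : β → ℂ} {M B : ℝ} (hk : AEStronglyMeasurable (Function.uncurry k) (μ.prod ν))
    (hkM : ∀ x y, ‖k x y‖ ≤ M) (hu : Integrable u ν) (hB : ∀ y, ‖∫ x, k x y ∂μ‖ ≤ B) :
    ‖∫ x, ∫ y, k x y * u y ∂ν ∂μ‖ ≤ B * ∫ y, ‖u y‖ ∂ν := by
  have hint : Integrable (Function.uncurry fun x y => k x y * u y) (μ.prod ν) :=
    ((integrable_const M).mul_prod hu.norm).mono' (hk.mul hu.1.comp_snd)
      (ae_of_all _ fun z => by
        simpa only [Function.uncurry, norm_mul] using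
          mul_le_mul_of_nonneg_right (hkM z.1 z.2) (norm_nonneg (u z.2)))
  rw [integral_integral_swap hint]
  calc ‖∫ y, ∫ x, k x y * u y ∂μ ∂ν‖ ≤ ∫ y, B * ‖u y‖ ∂ν := by
        refine norm_integral_le_of_norm_le (hu.norm.const_mul B) (ae_of_all _ fun y => ?_)
        rw [integral_mul_const, norm_mul]
        exact mul_le_mul_of_nonneg_right (hB y) (norm_nonneg _)
    _ = B * ∫ y, ‖u y‖ ∂ν := integral_const_mul B _

theorem norm_integral_le_of_norm_intervalIntegral_le {E : Type*} [NormedAddCommGroup E]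
    [NormedSpace ℝ E] {f : ℝ → E} {M : ℝ} (hM : 0 ≤ M)
    (h : ∀ R, 0 < R → ‖∫ x in -R..R, f x‖ ≤ M) : ‖∫ x, f x‖ ≤ M := by
  by_cases hf : Integrable f
  · exact le_of_tendsto
      (intervalIntegral_tendsto_integral hf Filter.tendsto_neg_atTop_atBot Filter.tendsto_id).norm
      ((Filter.eventually_gt_atTop 0).mono h)
  · rw [integral_undef hf, norm_zero]; exact hM

section VanDerCorput

variable {φ p q : ℝ → ℝ} {a b : ℝ}

theorem integral_div_sq_le_of_le_abs {δ : ℝ} (hab : a ≤ b) (hδ : 0 < δ)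
    (hp : ∀ ξ ∈ Icc a b, HasDerivAt p (q ξ) ξ) (hqc : ContinuousOn q (Icc a b))
    (hpδ : ∀ ξ ∈ Icc a b, δ ≤ |p ξ|) :
    ∫ ξ in a..b, q ξ / p ξ ^ 2 ≤ 2 / δ := by
  rw [← uIcc_of_le hab] at hp hqc hpδ
  have hp0 : ∀ ξ ∈ uIcc a b, p ξ ≠ 0 := fun ξ hξ h0 => by
    have := hpδ ξ hξ; rw [h0, abs_zero] at this; linarith
  have hpc : ContinuousOn p (uIcc a b) := fun ξ hξ => (hp ξ hξ).continuousAt.continuousWithinAt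
  calc ∫ ξ in a..b, q ξ / p ξ ^ 2 = (p a)⁻¹ - (p b)⁻¹ := by
        rw [intervalIntegral.integral_eq_sub_of_hasDerivAt (f := fun ξ => -(p ξ)⁻¹)
          (f' := fun ξ => q ξ / p ξ ^ 2)
          (fun ξ hξ => ((hp ξ hξ).inv (hp0 ξ hξ)).neg.congr_deriv (by ring))
          (hqc.div (hpc.pow 2) fun ξ hξ => pow_ne_zero 2 (hp0 ξ hξ)).intervalIntegrable]
        ring
    _ ≤ |p a|⁻¹ + |p b|⁻¹ := by rw [← abs_inv, ← abs_inv]; exact (le_abs_self _).trans (abs_sub _ _)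
    _ ≤ δ⁻¹ + δ⁻¹ :=
        add_le_add (inv_anti₀ hδ (hpδ a left_mem_uIcc)) (inv_anti₀ hδ (hpδ b right_mem_uIcc))
    _ = 2 / δ := by ring

theorem norm_integral_exp_le_of_le_abs_deriv {δ : ℝ} (hab : a ≤ b) (hδ : 0 < δ)
    (hφ : ∀ ξ ∈ Icc a b, HasDerivAt φ (p ξ) ξ) (hp : ∀ ξ ∈ Icc a b, HasDerivAt p (q ξ) ξ)
    (hq : ∀ ξ ∈ Icc a b, 0 ≤ q ξ) (hqc : ContinuousOn q (Icc a b))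
    (hpδ : ∀ ξ ∈ Icc a b, δ ≤ |p ξ|) :
    ‖∫ ξ in a..b, exp (I * φ ξ)‖ ≤ 4 / δ := by
  have hrem_le := integral_div_sq_le_of_le_abs hab hδ hp hqc hpδ
  rw [← uIcc_of_le hab] at hφ hp hq hqc hpδ
  have hp0 : ∀ ξ ∈ uIcc a b, p ξ ≠ 0 := fun ξ hξ h0 => by
    have := hpδ ξ hξ; rw [h0, abs_zero] at this; linarith
  have hpc : ContinuousOn p (uIcc a b) := fun ξ hξ => (hp ξ hξ).continuousAt.continuousWithinAt
  have hqp : ContinuousOn (fun ξ => q ξ / p ξ ^ 2) (uIcc a b) :=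
    hqc.div (hpc.pow 2) fun ξ hξ => pow_ne_zero 2 (hp0 ξ hξ)
  -- Write `exp (I φ) = G · (exp (I φ))'` with `G = -I / p` and integrate by parts.
  set F : ℝ → ℂ := fun ξ => exp (I * φ ξ)
  set G : ℝ → ℂ := fun ξ => -I * ((p ξ)⁻¹ : ℝ)
  have hF : ∀ ξ ∈ uIcc a b, HasDerivAt F (I * p ξ * F ξ) ξ := fun ξ hξ => by
    simpa [F, mul_comm] using (((hφ ξ hξ).ofReal_comp).const_mul I).cexp
  have hG : ∀ ξ ∈ uIcc a b, HasDerivAt G (I * ((q ξ / p ξ ^ 2 : ℝ) : ℂ)) ξ := fun ξ hξ =>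
    ((((hp ξ hξ).inv (hp0 ξ hξ)).ofReal_comp).const_mul (-I)).congr_deriv (by push_cast; ring)
  have hF_norm : ∀ ξ, ‖F ξ‖ = 1 := fun ξ => norm_exp_I_mul_ofReal _
  have hibp := intervalIntegral.integral_mul_deriv_eq_deriv_mul hG hF
    (continuousOn_const.mul (continuous_ofReal.comp_continuousOn hqp)).intervalIntegrable
    ((continuousOn_const.mul (continuous_ofReal.comp_continuousOn hpc)).mul
      fun ξ hξ => (hF ξ hξ).continuousAt.continuousWithinAt).intervalIntegrable
  have hGF : ∫ ξ in a..b, G ξ * (I * p ξ * F ξ) = ∫ ξ in a..b, F ξ := by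
    refine intervalIntegral.integral_congr fun ξ hξ => ?_
    have : (p ξ : ℂ) ≠ 0 := ofReal_ne_zero.mpr (hp0 ξ hξ)
    simp only [G, ofReal_inv]
    field_simp
    rw [I_sq]; ring
  have hG_norm : ∀ ξ ∈ uIcc a b, ‖G ξ * F ξ‖ ≤ 1 / δ := fun ξ hξ => by
    simpa [G, hF_norm] using inv_anti₀ hδ (hpδ ξ hξ)
  have hrem : ‖∫ ξ in a..b, I * ((q ξ / p ξ ^ 2 : ℝ) : ℂ) * F ξ‖ ≤ 2 / δ := by
    refine (intervalIntegral.norm_integral_le_of_norm_le hab (ae_of_all _ fun ξ hξ => ?_)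
      hqp.intervalIntegrable).trans hrem_le
    have hξ' : ξ ∈ uIcc a b := by rw [uIcc_of_le hab]; exact Ioc_subset_Icc_self hξ
    simp [hF_norm, abs_of_nonneg (hq ξ hξ')]
  calc ‖∫ ξ in a..b, F ξ‖
      = ‖G b * F b - G a * F a - ∫ ξ in a..b, I * ((q ξ / p ξ ^ 2 : ℝ) : ℂ) * F ξ‖ := by
        rw [← hGF, hibp]
    _ ≤ ‖G b * F b‖ + ‖G a * F a‖ + ‖∫ ξ in a..b, I * ((q ξ / p ξ ^ 2 : ℝ) : ℂ) * F ξ‖ :=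
        norm_sub_le_of_le (norm_sub_le _ _) le_rfl
    _ ≤ 1 / δ + 1 / δ + 2 / δ :=
        add_le_add (add_le_add (hG_norm b right_mem_uIcc) (hG_norm a left_mem_uIcc)) hrem
    _ = 4 / δ := by ring

theorem mul_abs_sub_le_abs_sub_of_le_deriv {lam : ℝ}
    (hp : ∀ ξ ∈ Icc a b, HasDerivAt p (q ξ) ξ) (hq : ∀ ξ ∈ Icc a b, lam ≤ q ξ) {x y : ℝ}
    (hx : x ∈ Icc a b) (hy : y ∈ Icc a b) :
    lam * |y - x| ≤ |p y - p x| := by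
  have hgap : ∀ x ∈ Icc a b, ∀ y ∈ Icc a b, x ≤ y → lam * (y - x) ≤ p y - p x :=
    (convex_Icc a b).mul_sub_le_image_sub_of_le_deriv
      (fun ξ hξ => (hp ξ hξ).continuousAt.continuousWithinAt)
      (fun ξ hξ => (hp ξ (interior_subset hξ)).differentiableAt.differentiableWithinAt)
      fun ξ hξ => (hp ξ (interior_subset hξ)).deriv ▸ hq ξ (interior_subset hξ)
  rcases le_total x y with h | h
  · rw [abs_of_nonneg (sub_nonneg.mpr h)]
    exact (hgap x hx y hy h).trans (le_abs_self _)
  · rw [abs_sub_comm, abs_of_nonneg (sub_nonneg.mpr h), abs_sub_comm]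
    exact (hgap y hy x hx h).trans (le_abs_self _)

theorem le_abs_of_isMinOn_abs {lam δ m ξ : ℝ} (hp : ∀ ξ ∈ Icc a b, HasDerivAt p (q ξ) ξ)
    (hq : ∀ ξ ∈ Icc a b, lam ≤ q ξ) (hm : m ∈ Icc a b)
    (hmin : IsMinOn (fun x => |p x|) (Icc a b) m) (hξ : ξ ∈ Icc a b)
    (hfar : 2 * δ ≤ lam * |ξ - m|) :
    δ ≤ |p ξ| := by
  have hsep := mul_abs_sub_le_abs_sub_of_le_deriv hp hq hm hξ
  have hmξ : |p m| ≤ |p ξ| := hmin hξ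
  linarith [abs_sub (p ξ) (p m)]

theorem norm_integral_exp_le_of_le_deriv2 {lam : ℝ} (hab : a ≤ b) (hlam : 0 < lam)
    (hφ : ∀ ξ ∈ Icc a b, HasDerivAt φ (p ξ) ξ) (hp : ∀ ξ ∈ Icc a b, HasDerivAt p (q ξ) ξ)
    (hqc : ContinuousOn q (Icc a b)) (hq : ∀ ξ ∈ Icc a b, lam ≤ q ξ) :
    ‖∫ ξ in a..b, exp (I * φ ξ)‖ ≤ 12 / √lam := by
  set δ := √lam
  have hδ : 0 < δ := Real.sqrt_pos.mpr hlam
  have hδ_sq : δ ^ 2 = lam := Real.sq_sqrt hlam.le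
  set r := 2 / δ
  have hr : 0 < r := by positivity
  have hpc : ContinuousOn p (Icc a b) := fun ξ hξ => (hp ξ hξ).continuousAt.continuousWithinAt
  -- Away from a minimum point `m` of `|p|`, the growth of `p` forces `|p| ≥ δ`.
  obtain ⟨m, hm, hmin⟩ := isCompact_Icc.exists_isMinOn (nonempty_Icc.mpr hab) hpc.abs
  have hfar : ∀ ξ ∈ Icc a b, r ≤ |ξ - m| → δ ≤ |p ξ| := by
    intro ξ hξ hrξ
    have h2δ : lam * r = 2 * δ := by simp only [r, ← hδ_sq]; field_simp
    exact le_abs_of_isMinOn_abs hp hq hm hmin hξ (h2δ ▸ mul_le_mul_of_nonneg_left hrξ hlam.le)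
  have hpiece : ∀ c d, a ≤ c → c ≤ d → d ≤ b → (∀ ξ ∈ Icc c d, r ≤ |ξ - m|) →
      ‖∫ ξ in c..d, exp (I * φ ξ)‖ ≤ 4 / δ := fun c d hac hcd hdb hr => by
    have hsub : Icc c d ⊆ Icc a b := Icc_subset_Icc hac hdb
    exact norm_integral_exp_le_of_le_abs_deriv hcd hδ (fun ξ hξ => hφ ξ (hsub hξ))
      (fun ξ hξ => hp ξ (hsub hξ)) (fun ξ hξ => hlam.le.trans (hq ξ (hsub hξ)))
      (hqc.mono hsub) fun ξ hξ => hfar ξ (hsub hξ) (hr ξ hξ)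
  have hcont : ContinuousOn (fun ξ => exp (I * φ ξ)) (Icc a b) := fun ξ hξ =>
    ((hφ ξ hξ).ofReal_comp.const_mul I).cexp.continuousAt.continuousWithinAt
  calc ‖∫ ξ in a..b, exp (I * φ ξ)‖ ≤ 2 * (4 / δ) + 2 * r :=
        norm_integral_le_of_le_off_window (hcont.intervalIntegrable_of_Icc hab)
          (fun ξ => (norm_exp_I_mul_ofReal _).le) hm hr.le (by positivity) hpiece
    _ = 12 / δ := by ring

theorem norm_integral_exp_le_of_le_abs_deriv2 {lam : ℝ} (hab : a ≤ b) (hlam : 0 < lam)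
    (hφ : ∀ ξ ∈ Icc a b, HasDerivAt φ (p ξ) ξ) (hp : ∀ ξ ∈ Icc a b, HasDerivAt p (q ξ) ξ)
    (hqc : ContinuousOn q (Icc a b)) (hq : ∀ ξ ∈ Icc a b, lam ≤ |q ξ|) :
    ‖∫ ξ in a..b, exp (I * φ ξ)‖ ≤ 12 / √lam := by
  -- By the intermediate value theorem, `q` cannot change sign.
  have hsign : (∀ ξ ∈ Icc a b, lam ≤ q ξ) ∨ ∀ ξ ∈ Icc a b, lam ≤ -q ξ := by
    by_contra! h
    obtain ⟨⟨x, hx, hqx⟩, y, hy, hqy⟩ := h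
    have hx0 : q x ≤ 0 := by cases abs_cases (q x) <;> linarith [hq x hx]
    have hy0 : 0 ≤ q y := by cases abs_cases (q y) <;> linarith [hq y hy]
    obtain ⟨z, hz, hqz⟩ := intermediate_value_uIcc (hqc.mono (uIcc_subset_Icc hx hy))
      (mem_uIcc.mpr (Or.inl ⟨hx0, hy0⟩))
    have := hq z (uIcc_subset_Icc hx hy hz)
    rw [hqz, abs_zero] at this
    linarith
  rcases hsign with hq' | hq'
  · exact norm_integral_exp_le_of_le_deriv2 hab hlam hφ hp hqc hq'
  · rw [← norm_integral_exp_I_mul_neg]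
    exact norm_integral_exp_le_of_le_deriv2 hab hlam (fun ξ hξ => (hφ ξ hξ).neg)
      (fun ξ hξ => (hp ξ hξ).neg) hqc.neg hq'

end VanDerCorput

noncomputable def ostrovskySymbol (b y : ℝ) : ℝ := 1 / y - b * y ^ 3

section OstrovskySymbol

variable {b y : ℝ}

@[fun_prop]
theorem measurable_ostrovskySymbol (b : ℝ) : Measurable (ostrovskySymbol b) := by
  unfold ostrovskySymbol; fun_prop

theorem hasDerivAt_ostrovskySymbol (hy : y ≠ 0) :
    HasDerivAt (ostrovskySymbol b) (-1 / y ^ 2 - 3 * b * y ^ 2) y := by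
  have := (hasDerivAt_inv hy).sub ((hasDerivAt_pow 3 y).const_mul b)
  rw [show ostrovskySymbol b = fun y => y⁻¹ - b * y ^ 3 by ext; simp [ostrovskySymbol]]
  exact this.congr_deriv (by ring)

theorem hasDerivAt_deriv_ostrovskySymbol (hy : y ≠ 0) :
    HasDerivAt (fun y => -1 / y ^ 2 - 3 * b * y ^ 2) (2 / y ^ 3 - 6 * b * y) y := by
  have := (((hasDerivAt_pow 2 y).inv (pow_ne_zero 2 hy)).neg.sub
    ((hasDerivAt_pow 2 y).const_mul (3 * b)))
  simp only [neg_div, one_div]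
  exact this.congr_deriv (by field_simp; ring)

theorem iteratedDeriv_two_ostrovskySymbol (hy : y ≠ 0) :
    iteratedDeriv 2 (ostrovskySymbol b) y = 2 / y ^ 3 - 6 * b * y := by
  have hderiv : deriv (ostrovskySymbol b) =ᶠ[nhds y] fun y => -1 / y ^ 2 - 3 * b * y ^ 2 :=
    Filter.mem_of_superset (isOpen_ne.mem_nhds hy) fun z hz => (hasDerivAt_ostrovskySymbol hz).deriv
  rw [iteratedDeriv_succ, iteratedDeriv_one, hderiv.deriv_eq]
  exact (hasDerivAt_deriv_ostrovskySymbol hy).deriv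

theorem le_deriv2_ostrovskySymbol (hb : b ≤ 0) (hy : 0 < y) :
    2 / y ^ 3 ≤ 2 / y ^ 3 - 6 * b * y ∧ 6 * |b| * y ≤ 2 / y ^ 3 - 6 * b * y := by
  have : 0 < 2 / y ^ 3 := by positivity
  rw [abs_of_nonpos hb]
  constructor <;> nlinarith

theorem min_le_deriv2_ostrovskySymbol (hb : b ≤ 0) (hy : 0 < y) :
    min 2 (-6 * b) ≤ 2 / y ^ 3 - 6 * b * y := by
  rcases le_or_gt y 1 with h | h
  · have : 2 ≤ 2 / y ^ 3 := by
      rw [le_div_iff₀ (by positivity)]; nlinarith [pow_le_one₀ hy.le h (n := 3)]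
    nlinarith [min_le_left 2 (-6 * b)]
  · have : 0 < 2 / y ^ 3 := by positivity
    nlinarith [min_le_right 2 (-6 * b)]

end OstrovskySymbol

section Kernel

variable {b t : ℝ}

theorem norm_integral_exp_ostrovsky_le (hb : b < 0) (ht : t ≠ 0) (z : ℝ) {ε R : ℝ}
    (hε : 0 < ε) (hεR : ε ≤ R) :
    ‖∫ ξ in ε..R, exp (I * ((z * ξ + t * ostrovskySymbol b ξ : ℝ) : ℂ))‖ ≤
      12 / √(|t| * min 2 (-6 * b)) := by
  have hmin : 0 < min 2 (-6 * b) := lt_min two_pos (by linarith)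
  have hpos : ∀ ξ ∈ Icc ε R, 0 < ξ := fun ξ hξ => hε.trans_le hξ.1
  refine norm_integral_exp_le_of_le_abs_deriv2 (p := fun ξ => z + t * (-1 / ξ ^ 2 - 3 * b * ξ ^ 2))
    (q := fun ξ => t * (2 / ξ ^ 3 - 6 * b * ξ)) hεR (by positivity)
    (fun ξ hξ => (((hasDerivAt_id ξ).const_mul z).add
      ((hasDerivAt_ostrovskySymbol (hpos ξ hξ).ne').const_mul t)).congr_deriv (by ring))
    (fun ξ hξ => ((hasDerivAt_deriv_ostrovskySymbol (hpos ξ hξ).ne').const_mul t).const_add z)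
    (by fun_prop (disch := intro ξ hξ; exact pow_ne_zero _ (hpos ξ hξ).ne')) fun ξ hξ => ?_
  have hq := min_le_deriv2_ostrovskySymbol hb.le (hpos ξ hξ)
  rw [abs_mul, abs_of_pos (hmin.trans_le hq)]
  exact mul_le_mul_of_nonneg_left hq (abs_nonneg t)

theorem norm_integral_exp_ostrovsky_abs_le (hb : b < 0) (ht : t ≠ 0) (z : ℝ) {R : ℝ}
    (hR : 0 < R) :
    ‖∫ ξ in -R..R, exp (I * ((z * ξ + t * ostrovskySymbol b |ξ| : ℝ) : ℂ))‖ ≤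
      24 / √(|t| * min 2 (-6 * b)) := by
  set K : ℝ → ℂ := fun ξ => exp (I * ((z * ξ + t * ostrovskySymbol b |ξ| : ℝ) : ℂ))
  have hK : IntervalIntegrable K volume (-R) R :=
    (intervalIntegrable_const (c := (1 : ℝ))).mono_fun'
      (by fun_prop : Measurable K).aestronglyMeasurable
      (ae_of_all _ fun ξ => (norm_exp_I_mul_ofReal _).le)
  -- `K` is bounded by one, so cutting out `[-ε, ε]` around the singularity costs at most `2ε`.
  refine le_of_forall_pos_le_add fun ε hε => ?_
  set ε' := min (ε / 2) R
  have hε' : 0 < ε' := lt_min (by positivity) hR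
  have hε'R : ε' ≤ R := min_le_right _ _
  have hright : ∫ ξ in ε'..R, K ξ =
      ∫ ξ in ε'..R, exp (I * ((z * ξ + t * ostrovskySymbol b ξ : ℝ) : ℂ)) :=
    intervalIntegral.integral_congr fun ξ hξ => by
      rw [uIcc_of_le hε'R] at hξ
      simp only [K, abs_of_pos (hε'.trans_le hξ.1)]
  have hleft : ∫ ξ in -R..-ε', K ξ =
      ∫ ξ in ε'..R, exp (I * ((-z * ξ + t * ostrovskySymbol b ξ : ℝ) : ℂ)) := by
    rw [← intervalIntegral.integral_comp_neg]
    refine intervalIntegral.integral_congr fun ξ hξ => ?_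
    rw [uIcc_of_le hε'R] at hξ
    simp only [K, abs_neg, abs_of_pos (hε'.trans_le hξ.1), mul_neg, neg_mul]
  have hmiddle : ‖∫ ξ in -ε'..ε', K ξ‖ ≤ ε := calc
    _ ≤ 1 * |ε' - -ε'| := intervalIntegral.norm_integral_le_of_norm_le_const fun ξ _ =>
        (norm_exp_I_mul_ofReal _).le
    _ ≤ ε := by
      rw [one_mul, abs_of_pos (by linarith)]
      linarith [min_le_left (ε / 2) R]
  calc _ ≤ ‖∫ ξ in -R..-ε', K ξ‖ + ‖∫ ξ in -ε'..ε', K ξ‖ + ‖∫ ξ in ε'..R, K ξ‖ :=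
        norm_integral_le_add_add_of_mem_Icc hK ⟨by linarith, by linarith⟩ ⟨by linarith, hε'R⟩
    _ ≤ 12 / √(|t| * min 2 (-6 * b)) + ε + 12 / √(|t| * min 2 (-6 * b)) := by
        rw [hleft, hright]
        exact add_le_add (add_le_add (norm_integral_exp_ostrovsky_le hb ht (-z) hε' hε'R) hmiddle)
          (norm_integral_exp_ostrovsky_le hb ht z hε' hε'R)
    _ = 24 / √(|t| * min 2 (-6 * b)) + ε := by ring

theorem norm_integral_ostrovsky_propagator_le (hb : b < 0) (ht : t ≠ 0) {u : ℝ → ℂ}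
    (hu : Integrable u) (x : ℝ) :
    ‖∫ ξ, exp (I * ((x * ξ : ℝ) : ℂ)) * exp (I * ((t * ostrovskySymbol b |ξ| : ℝ) : ℂ)) *
        ∫ y, exp (-(I * ((y * ξ : ℝ) : ℂ))) * u y‖ ≤
      24 / √(|t| * min 2 (-6 * b)) * ∫ y, ‖u y‖ := by
  have hfactor : ∀ ξ : ℝ, exp (I * ((x * ξ : ℝ) : ℂ)) *
      exp (I * ((t * ostrovskySymbol b |ξ| : ℝ) : ℂ)) * ∫ y, exp (-(I * ((y * ξ : ℝ) : ℂ))) * u y =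
      ∫ y, exp (I * (((x - y) * ξ + t * ostrovskySymbol b |ξ| : ℝ) : ℂ)) * u y := fun ξ => by
    rw [← integral_const_mul]
    congr 1 with y
    rw [← mul_assoc, ← exp_add, ← exp_add]
    congr 2; push_cast; ring
  simp_rw [hfactor]
  refine norm_integral_le_of_norm_intervalIntegral_le (by positivity) fun R hR => ?_
  rw [intervalIntegral.integral_of_le (by linarith)]
  refine norm_integral_integral_mul_le (by fun_prop) (fun _ _ => (norm_exp_I_mul_ofReal _).le)
    hu fun y => ?_
  rw [← intervalIntegral.integral_of_le (by linarith)]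
  exact norm_integral_exp_ostrovsky_abs_le hb ht (x - y) hR

end Kernel

/-- Linearized Ostrovsky equation with `b < 0`: convexity bounds for
`g(y) = 1/y - by³` and the `L¹ → L^∞` dispersive decay `|t|^{-1/2}`. -/
theorem stmt18 (b : ℝ) (hb : b < 0) (g : ℝ → ℝ)
    (hg : ∀ y : ℝ, g y = 1 / y - b * y ^ 3) :
    (∀ y : ℝ, 0 < y →
      iteratedDeriv 2 g y = 2 / y ^ 3 - 6 * b * y ∧
      0 < iteratedDeriv 2 g y ∧
      2 * y ^ (-3 : ℝ) ≤ |iteratedDeriv 2 g y| ∧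
      6 * |b| * y ≤ |iteratedDeriv 2 g y|) ∧
    ∃ C : ℝ, 0 < C ∧ ∀ u₀ : ℝ → ℂ, Integrable u₀ → ∀ t : ℝ, t ≠ 0 → ∀ x : ℝ,
      ‖((1 / (2 * Real.pi) : ℝ) : ℂ) *
        ∫ ξ : ℝ, Complex.exp (Complex.I * ((x * ξ : ℝ) : ℂ)) *
          Complex.exp (Complex.I * ((t * g |ξ| : ℝ) : ℂ)) *
          ∫ y : ℝ, Complex.exp (-(Complex.I * ((y * ξ : ℝ) : ℂ))) * u₀ y‖ ≤
      C / Real.sqrt |t| * ∫ y : ℝ, ‖u₀ y‖ := by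
  obtain rfl : g = ostrovskySymbol b := funext hg
  refine ⟨fun y hy => ?_, ?_⟩
  · obtain ⟨h2, h6⟩ := le_deriv2_ostrovskySymbol hb.le hy
    have hpos : 0 < 2 / y ^ 3 - 6 * b * y := (by positivity : (0 : ℝ) < 2 / y ^ 3).trans_le h2
    rw [iteratedDeriv_two_ostrovskySymbol hy.ne', abs_of_pos hpos, Real.rpow_neg hy.le]
    exact ⟨rfl, hpos, by simpa [div_eq_mul_inv] using h2, h6⟩
  have hmin : 0 < min 2 (-6 * b) := lt_min two_pos (by linarith)
  refine ⟨24 / √(min 2 (-6 * b)), by positivity, fun u₀ hu t ht x => ?_⟩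
  have h2π : ‖((1 / (2 * Real.pi) : ℝ) : ℂ)‖ ≤ 1 := by
    rw [norm_real, Real.norm_of_nonneg (by positivity), div_le_one (by positivity)]
    linarith [Real.pi_gt_three]
  calc _ ≤ 1 * (24 / √(|t| * min 2 (-6 * b)) * ∫ y, ‖u₀ y‖) :=
        norm_mul_le_of_le h2π (norm_integral_ostrovsky_propagator_le hb ht hu x)
    _ = 24 / √(|t| * min 2 (-6 * b)) * ∫ y, ‖u₀ y‖ := one_mul _
    _ = 24 / √(min 2 (-6 * b)) / √|t| * ∫ y, ‖u₀ y‖ := by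
        rw [Real.sqrt_mul (abs_nonneg t), div_div, mul_comm (√|t|)]
end
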